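/- arXiv:2108.10827 — 6 statements merged into one kernel-verified Lean document; each statement's English description precedes it below -/
import Mathlib

section
/- Let λ be a Young diagram and define the Laurent polynomial g_λ(t) ∈ ℤ[t,t^{−1}] by g_λ(t) = Σ_{(a,a)∈λ, a≥1} t^{−a} + Σ_{((i,j),(l,k))∈λ×λ : i−l = j−k = a, a∈ℤ, a∉{0,1}} sgn(a)·t^{a} − Σ_{((i,j),(l,k))∈λ×λ : i−l+1 = j−k = a, a∈ℤ, a∉{0,1}} sgn(a)·t^{a}. Then there exists a Laurent polynomial A(t) ∈ ℤ[t,t^{−1}] such that g_λ(t) = A(t) + t·A(t^{−1}). -/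
/-!
Comparing coefficients, `g = A + t·A(t⁻¹)` is solvable exactly when `[tⁿ] g = [t^{1-n}] g` for
all `n` (take for `A` the part of `g` in positive degrees). The pair sums in `g` count pairs of
cells by displacement; that count is invariant under negating the displacement and, for a
displacement `(i, j)` with `i, j ≥ 0`, equals the number of cells in the quadrant
`[i, ∞) × [j, ∞)`, since a Young diagram is a lower set. For `b ≥ 1` the required identity
`[t^{b+1}] g = [t^{-b}] g` then becomes inclusion–exclusion on quadrants: the indicator of the
diagonal cell `(b, b)` is the second difference of the quadrant counts at `(b, b)`.
-/

open LaurentPolynomial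

/-- The ring involution of `ℤ[T,T⁻¹]` sending `T ↦ T⁻¹`, induced by negation on the
exponents. -/
noncomputable def laurentInvert : LaurentPolynomial ℤ ≃ₐ[ℤ] LaurentPolynomial ℤ :=
  AddMonoidAlgebra.domCongr ℤ ℤ (AddEquiv.neg ℤ)

/-- The Laurent polynomial
`g_μ(t) = Σ_{(a,a)∈μ, a≥1} t^{−a}
  + Σ_{((i,j),(l,k))∈μ×μ : i−l = j−k = a, a∉{0,1}} sgn(a)·t^{a}
  − Σ_{((i,j),(l,k))∈μ×μ : i−l+1 = j−k = a, a∉{0,1}} sgn(a)·t^{a}`. -/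
noncomputable def gLam (μ : YoungDiagram) : LaurentPolynomial ℤ :=
  (∑ c ∈ μ.cells.filter (fun c => c.1 = c.2 ∧ 1 ≤ c.1), T (-(c.1 : ℤ)))
  + (∑ p ∈ (μ.cells ×ˢ μ.cells).filter
        (fun p => (p.1.1 : ℤ) - p.2.1 = (p.1.2 : ℤ) - p.2.2
          ∧ (p.1.1 : ℤ) - p.2.1 ≠ 0 ∧ (p.1.1 : ℤ) - p.2.1 ≠ 1),
      C ((p.1.1 : ℤ) - p.2.1).sign * T ((p.1.1 : ℤ) - p.2.1))
  - (∑ p ∈ (μ.cells ×ˢ μ.cells).filter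
        (fun p => (p.1.1 : ℤ) - p.2.1 + 1 = (p.1.2 : ℤ) - p.2.2
          ∧ (p.1.1 : ℤ) - p.2.1 + 1 ≠ 0 ∧ (p.1.1 : ℤ) - p.2.1 + 1 ≠ 1),
      C ((p.1.1 : ℤ) - p.2.1 + 1).sign * T ((p.1.1 : ℤ) - p.2.1 + 1))

open Finset

namespace LaurentPolynomial

variable {R : Type*}

theorem coeff_sum_C_mul_T [Semiring R] {ι : Type*} (s : Finset ι) (f : ι → R) (e : ι → ℤ)
    (n : ℤ) : (∑ i ∈ s, C (f i) * T (e i) : R[T;T⁻¹]).coeff n = ∑ i ∈ s with e i = n, f i := by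
  simp only [AddMonoidAlgebra.coeff_sum, sum_apply', ← single_eq_C_mul_T,
    AddMonoidAlgebra.coeff_single, Finsupp.single_apply, sum_ite, sum_const_zero, add_zero]

theorem coeff_T_mul_invert [CommSemiring R] (m n : ℤ) (f : R[T;T⁻¹]) :
    (T m * invert f).coeff n = f.coeff (m - n) := by
  rw [T, AddMonoidAlgebra.coeff_single_mul_apply, one_mul, invert_apply, neg_add, neg_neg,
    sub_eq_add_neg]

theorem exists_eq_add_T_one_mul_invert [CommSemiring R] {P : R[T;T⁻¹]}
    (hP : ∀ n, P.coeff n = P.coeff (1 - n)) : ∃ A, P = A + T 1 * invert A := by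
  refine ⟨AddMonoidAlgebra.ofCoeff (P.coeff.filter (1 ≤ ·)), LaurentPolynomial.ext fun n => ?_⟩
  rw [AddMonoidAlgebra.coeff_add, Finsupp.add_apply, coeff_T_mul_invert]
  simp only [Finsupp.filter_apply]
  by_cases hn : 1 ≤ n
  · simp [hn, show ¬ 1 ≤ 1 - n by omega]
  · simp [hn, show 1 ≤ 1 - n by omega, hP n]

end LaurentPolynomial

def displacementCount (s : Finset (ℕ × ℕ)) (x y : ℤ) : ℕ :=
  #{p ∈ s ×ˢ s | (p.1.1 : ℤ) - p.2.1 = x ∧ (p.1.2 : ℤ) - p.2.2 = y}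

def quadrantCount (s : Finset (ℕ × ℕ)) (i j : ℕ) : ℕ :=
  #{c ∈ s | i ≤ c.1 ∧ j ≤ c.2}

theorem displacementCount_neg (s : Finset (ℕ × ℕ)) (x y : ℤ) :
    displacementCount s (-x) (-y) = displacementCount s x y := by
  refine card_equiv (Equiv.prodComm _ _) fun p => ?_
  simp only [mem_filter, mem_product, Equiv.prodComm_apply, Prod.fst_swap, Prod.snd_swap]
  constructor <;> exact fun ⟨⟨h₁, h₂⟩, hx, hy⟩ => ⟨⟨h₂, h₁⟩, by omega, by omega⟩

theorem quadrantCount_add_quadrantCount (s : Finset (ℕ × ℕ)) (b : ℕ) :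
    quadrantCount s b b + quadrantCount s (b + 1) (b + 1) =
      (if (b, b) ∈ s then 1 else 0) + quadrantCount s b (b + 1) + quadrantCount s (b + 1) b := by
  simp only [quadrantCount, card_filter, ← sum_ite_eq' s (b, b) (fun _ => 1), ← sum_add_distrib]
  refine sum_congr rfl fun c _ => ?_
  obtain ⟨i, j⟩ := c
  simp only [Prod.mk.injEq]
  split_ifs <;> omega

theorem YoungDiagram.displacementCount_cells (μ : YoungDiagram) (i j : ℕ) :
    displacementCount μ.cells i j = quadrantCount μ.cells i j := by
  refine card_nbij' Prod.fst (fun c => (c, (c.1 - i, c.2 - j))) ?_ ?_ ?_ ?_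
  · rintro ⟨c, d⟩
    simp only [coe_filter, mem_product, Set.mem_ofPred_eq]
    exact fun ⟨⟨hc, _⟩, hi, hj⟩ => ⟨hc, by omega, by omega⟩
  · rintro c
    simp only [coe_filter, mem_product, Set.mem_ofPred_eq, YoungDiagram.mem_cells]
    exact fun ⟨hc, hi, hj⟩ =>
      ⟨⟨hc, μ.up_left_mem (Nat.sub_le _ _) (Nat.sub_le _ _) hc⟩, by omega, by omega⟩
  · rintro ⟨c, d⟩
    simp only [coe_filter, mem_product, Set.mem_ofPred_eq]
    rintro ⟨_, hi, hj⟩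
    ext <;> simp only <;> omega
  · exact fun _ _ => rfl

theorem coeff_gLam (μ : YoungDiagram) (n : ℤ) :
    (gLam μ).coeff n = (#{c ∈ μ.cells | c.1 = c.2 ∧ 1 ≤ c.1 ∧ -(c.1 : ℤ) = n} : ℤ) +
      if n = 0 ∨ n = 1 then 0
      else n.sign *
        ((displacementCount μ.cells n n : ℤ) - displacementCount μ.cells (n - 1) n) := by
  have sum_sign (s : Finset ((ℕ × ℕ) × (ℕ × ℕ))) (e : (ℕ × ℕ) × (ℕ × ℕ) → ℤ) :
      ∑ i ∈ s with e i = n, (e i).sign = #{i ∈ s | e i = n} * n.sign := by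
    rw [sum_congr rfl fun i hi => by rw [(mem_filter.1 hi).2], sum_const, nsmul_eq_mul]
  simp only [gLam, AddMonoidAlgebra.coeff_add, AddMonoidAlgebra.coeff_sub, Finsupp.add_apply,
    Finsupp.sub_apply, coeff_sum_C_mul_T, sum_sign]
  simp only [AddMonoidAlgebra.coeff_sum, Finsupp.finsetSum_apply, T_apply, sum_boole,
    filter_filter, and_assoc, displacementCount]
  split_ifs with hn
  · rw [filter_false_of_mem fun c _ h => by omega, filter_false_of_mem fun p _ h => by omega,
      filter_false_of_mem fun p _ h => by omega]
    simp
  · have h₁ : {p ∈ μ.cells ×ˢ μ.cells | (p.1.1 : ℤ) - p.2.1 = p.1.2 - p.2.2 ∧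
          (p.1.1 : ℤ) - p.2.1 ≠ 0 ∧ (p.1.1 : ℤ) - p.2.1 ≠ 1 ∧ (p.1.1 : ℤ) - p.2.1 = n} =
        {p ∈ μ.cells ×ˢ μ.cells | (p.1.1 : ℤ) - p.2.1 = n ∧ (p.1.2 : ℤ) - p.2.2 = n} :=
      filter_congr fun p _ => by omega
    have h₂ : {p ∈ μ.cells ×ˢ μ.cells | (p.1.1 : ℤ) - p.2.1 + 1 = p.1.2 - p.2.2 ∧
          (p.1.1 : ℤ) - p.2.1 + 1 ≠ 0 ∧ (p.1.1 : ℤ) - p.2.1 + 1 ≠ 1 ∧ (p.1.1 : ℤ) - p.2.1 + 1 = n} =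
        {p ∈ μ.cells ×ˢ μ.cells | (p.1.1 : ℤ) - p.2.1 = n - 1 ∧ (p.1.2 : ℤ) - p.2.2 = n} :=
      filter_congr fun p _ => by omega
    rw [h₁, h₂]
    ring

theorem coeff_gLam_natCast_add_one (μ : YoungDiagram) {b : ℕ} (hb : 1 ≤ b) :
    (gLam μ).coeff (b + 1) = (quadrantCount μ.cells (b + 1) (b + 1) : ℤ) -
      quadrantCount μ.cells b (b + 1) := by
  have h₁ := μ.displacementCount_cells (b + 1) (b + 1)
  have h₂ := μ.displacementCount_cells b (b + 1)
  push_cast at h₁ h₂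
  rw [coeff_gLam, if_neg (by omega), filter_false_of_mem fun c _ h => by omega,
    Int.sign_eq_one_of_pos (by omega), add_sub_cancel_right, h₁, h₂]
  simp

theorem coeff_gLam_neg_natCast (μ : YoungDiagram) {b : ℕ} (hb : 1 ≤ b) :
    (gLam μ).coeff (-b) = (if (b, b) ∈ μ then 1 else 0) - (quadrantCount μ.cells b b : ℤ) +
      quadrantCount μ.cells (b + 1) b := by
  have h₁ : displacementCount μ.cells (-b) (-b) = quadrantCount μ.cells b b := by
    rw [displacementCount_neg, μ.displacementCount_cells]
  have h₂ : displacementCount μ.cells (-b - 1) (-b) = quadrantCount μ.cells (b + 1) b := by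
    rw [show (-b - 1 : ℤ) = -((b + 1 : ℕ) : ℤ) by push_cast; ring, displacementCount_neg,
      μ.displacementCount_cells]
  have hdiag :
      {c ∈ μ.cells | c.1 = c.2 ∧ 1 ≤ c.1 ∧ -(c.1 : ℤ) = -b} = {c ∈ μ.cells | c = (b, b)} :=
    filter_congr fun c _ => by rw [Prod.ext_iff]; omega
  rw [coeff_gLam, if_neg (by omega), hdiag, filter_eq', Int.sign_eq_neg_one_of_neg (by omega),
    h₁, h₂]
  by_cases h : (b, b) ∈ μ <;> simp [h] <;> ring

theorem coeff_gLam_one_sub (μ : YoungDiagram) (n : ℤ) :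
    (gLam μ).coeff (1 - n) = (gLam μ).coeff n := by
  wlog hn : 1 ≤ n generalizing n
  · rw [← this (1 - n) (by omega), sub_sub_cancel]
  obtain ⟨b, rfl⟩ : ∃ b : ℕ, n = b + 1 := ⟨(n - 1).toNat, by omega⟩
  rcases Nat.eq_zero_or_pos b with rfl | hb
  · have hdiag (n : ℤ) (hn : 0 ≤ n) :
        {c ∈ μ.cells | c.1 = c.2 ∧ 1 ≤ c.1 ∧ -(c.1 : ℤ) = n} = ∅ :=
      filter_false_of_mem fun c _ h => by omega
    rw [coeff_gLam, coeff_gLam, hdiag _ (by omega), hdiag _ (by omega)]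
    simp
  rw [show (1 - (b + 1) : ℤ) = -b by ring, coeff_gLam_neg_natCast μ hb,
    coeff_gLam_natCast_add_one μ hb]
  have := quadrantCount_add_quadrantCount μ.cells b
  by_cases h : (b, b) ∈ μ <;>
    simp only [YoungDiagram.mem_cells, h, if_true, if_false] at this ⊢ <;> omega

theorem laurentInvert_eq_invert : laurentInvert = invert := rfl

/-- **Lemma.** For every Young diagram `μ` there is a Laurent polynomial `A(t)` with
`g_μ(t) = A(t) + t·A(t⁻¹)`. -/
theorem gLam_eq_A_add_T_mul_invert_A (μ : YoungDiagram) :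
    ∃ A : LaurentPolynomial ℤ, gLam μ = A + T 1 * laurentInvert A := by
  rw [laurentInvert_eq_invert]
  exact exists_eq_add_T_one_mul_invert fun n => (coeff_gLam_one_sub μ n).symm
end

section
/- Let λ be a Young diagram and define the Laurent polynomial h_λ(t) ∈ ℤ[t,t^{−1}] by h_λ(t) = Σ_{(a,a)∈λ, a≥1} t^{−a} − Σ_{((i,j),(l,k))∈λ×λ : i−l = j−k = a, a∈ℤ, a∉{0,1}} t^{a} + Σ_{((i,j),(l,k))∈λ×λ : i−l+1 = j−k = a, a∈ℤ, a∉{0,1}} t^{a}. Then there exists a Laurent polynomial B(t) ∈ ℤ[t,t^{−1}] such that h_λ(t) = B(t) − t·B(t^{−1}). -/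
open LaurentPolynomial

/-- The Laurent polynomial
`h_μ(t) = Σ_{(a,a)∈μ, a≥1} t^{−a}
  − Σ_{((i,j),(l,k))∈μ×μ : i−l = j−k = a, a∉{0,1}} t^{a}
  + Σ_{((i,j),(l,k))∈μ×μ : i−l+1 = j−k = a, a∉{0,1}} t^{a}`. -/
noncomputable def hLam (μ : YoungDiagram) : LaurentPolynomial ℤ :=
  (∑ c ∈ μ.cells.filter (fun c => c.1 = c.2 ∧ 1 ≤ c.1), T (-(c.1 : ℤ)))
  - (∑ p ∈ (μ.cells ×ˢ μ.cells).filter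
        (fun p => (p.1.1 : ℤ) - p.2.1 = (p.1.2 : ℤ) - p.2.2
          ∧ (p.1.1 : ℤ) - p.2.1 ≠ 0 ∧ (p.1.1 : ℤ) - p.2.1 ≠ 1),
      T ((p.1.1 : ℤ) - p.2.1))
  + (∑ p ∈ (μ.cells ×ˢ μ.cells).filter
        (fun p => (p.1.1 : ℤ) - p.2.1 + 1 = (p.1.2 : ℤ) - p.2.2
          ∧ (p.1.1 : ℤ) - p.2.1 + 1 ≠ 0 ∧ (p.1.1 : ℤ) - p.2.1 + 1 ≠ 1),
      T ((p.1.1 : ℤ) - p.2.1 + 1))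

/-! Any Laurent polynomial `f` with `[t^(1-m)] f = -[t^m] f` for all `m` equals `B - t·B(t⁻¹)`,
where `B` is the part of `f` of positive degree; so it suffices to check this antisymmetry for
`h_λ`. Let `P(u,v)` be the number of pairs of cells of `λ` with difference `(u,v)`. For
`m = -a ≤ -1` the antisymmetry reads `P(a,a) + P(a+1,a+1) = [(a,a) ∈ λ] + P(a+1,a) + P(a,a+1)`.
This follows from `P(x,y) = P(x,y+1) + (colLen y - x)`: moving the second cell one column to the
right matches the pairs counted by `P(x,y+1)` with the pairs counted by `P(x,y)` whose second cell
is not in column `0`, and there are `colLen y - x` pairs of the latter kind. -/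

open Finset

namespace LaurentPolynomial

theorem exists_eq_sub_T_one_mul_invert_of_coeff_one_sub {R : Type*} [CommRing R] (f : R[T;T⁻¹])
    (hf : ∀ n, f.coeff (1 - n) = -f.coeff n) :
    ∃ B : R[T;T⁻¹], f = B - T 1 * invert B := by
  refine ⟨.ofCoeff (f.coeff.filter (0 < ·)), ext fun m => ?_⟩
  simp only [T, AddMonoidAlgebra.coeff_sub, Finsupp.coe_sub, Pi.sub_apply,
    AddMonoidAlgebra.coeff_single_mul_apply, invert_apply, one_mul, Finsupp.filter_apply]
  rw [show -(-1 + m) = 1 - m by ring, hf m]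
  split_ifs <;> first | omega | simp

end LaurentPolynomial

namespace YoungDiagram

variable (μ : YoungDiagram)

def pairCount (u v : ℤ) : ℕ :=
  #{p ∈ μ.cells ×ˢ μ.cells | (p.1.1 : ℤ) - p.2.1 = u ∧ (p.1.2 : ℤ) - p.2.2 = v}

theorem pairCount_neg (u v : ℤ) : μ.pairCount (-u) (-v) = μ.pairCount u v := by
  unfold pairCount
  refine card_nbij' Prod.swap Prod.swap ?_ ?_ (fun _ _ => rfl) (fun _ _ => rfl) <;>
  · intro p hp
    simp only [mem_coe, mem_filter, mem_product, Prod.fst_swap, Prod.snd_swap] at hp ⊢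
    exact ⟨hp.1.symm, by omega, by omega⟩

theorem pairCount_natCast (x y : ℕ) :
    μ.pairCount x y = #{c ∈ μ.cells | (c.1 + x, c.2 + y) ∈ μ} := by
  unfold pairCount
  refine card_nbij' Prod.snd (fun c => ((c.1 + x, c.2 + y), c)) ?_ ?_ ?_ (fun _ _ => rfl)
  · rintro ⟨⟨i, j⟩, ⟨k, l⟩⟩ hp
    simp only [mem_coe, mem_filter, mem_product, mem_cells] at hp ⊢
    obtain ⟨⟨h, h'⟩, hi, hj⟩ := hp
    refine ⟨h', ?_⟩
    convert h using 2 <;> omega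
  · rintro c hc
    simp only [mem_coe, mem_filter, mem_cells, mem_product] at hc ⊢
    exact ⟨⟨hc.2, hc.1⟩, by push_cast; ring, by push_cast; ring⟩
  · rintro ⟨⟨i, j⟩, ⟨k, l⟩⟩ hp
    simp only [mem_coe, mem_filter, mem_product, mem_cells, Prod.mk.injEq, and_true] at hp ⊢
    omega

theorem card_filter_add_succ_mem (x y : ℕ) :
    #{c ∈ μ.cells | (c.1 + x, c.2 + (y + 1)) ∈ μ}
      = #{c ∈ μ.cells | (c.1 + x, c.2 + y) ∈ μ ∧ c.2 ≠ 0} := by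
  refine card_nbij' (fun c => (c.1, c.2 + 1)) (fun c => (c.1, c.2 - 1)) ?_ ?_ ?_ ?_
  · rintro ⟨i, j⟩ hc
    simp only [mem_coe, mem_filter, mem_cells] at hc ⊢
    rw [add_right_comm, add_assoc]
    exact ⟨μ.up_left_mem (Nat.le_add_right i x) (by omega) hc.2, hc.2, by omega⟩
  · rintro ⟨i, j⟩ hc
    simp only [mem_coe, mem_filter, mem_cells] at hc ⊢
    obtain ⟨hij, hshift, hj⟩ := hc
    rw [show j - 1 + (y + 1) = j + y by omega]
    exact ⟨μ.up_left_mem le_rfl (Nat.sub_le j 1) hij, hshift⟩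
  · intro c _
    simp
  · rintro ⟨i, j⟩ hc
    simp only [mem_coe, mem_filter] at hc
    simp only [Prod.mk.injEq, true_and]
    omega

theorem card_filter_add_mem_snd_eq_zero (x y : ℕ) :
    #{c ∈ μ.cells | (c.1 + x, c.2 + y) ∈ μ ∧ c.2 = 0} = μ.colLen y - x := by
  rw [← card_range (μ.colLen y - x)]
  refine card_nbij' Prod.fst (fun i => (i, 0)) ?_ ?_ ?_ (fun _ _ => rfl)
  · rintro ⟨i, j⟩ hc
    simp only [mem_coe, mem_filter, mem_range] at hc ⊢
    obtain ⟨-, hshift, rfl⟩ := hc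
    rw [zero_add, mem_iff_lt_colLen] at hshift
    omega
  · intro i hi
    simp only [mem_coe, mem_filter, mem_cells, mem_range, zero_add] at hi ⊢
    have hmem : (i + x, y) ∈ μ := mem_iff_lt_colLen.mpr (by omega)
    exact ⟨μ.up_left_mem (Nat.le_add_right i x) (Nat.zero_le y) hmem, hmem, trivial⟩
  · rintro ⟨i, j⟩ hc
    simp only [mem_coe, mem_filter] at hc
    simp [hc.2.2]

theorem card_filter_add_mem_eq_add_colLen (x y : ℕ) :
    #{c ∈ μ.cells | (c.1 + x, c.2 + y) ∈ μ}
      = #{c ∈ μ.cells | (c.1 + x, c.2 + (y + 1)) ∈ μ} + (μ.colLen y - x) := by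
  rw [card_filter_add_succ_mem, ← card_filter_add_mem_snd_eq_zero, ← filter_filter,
    ← filter_filter, add_comm, card_filter_add_card_filter_not]

theorem pairCount_add_pairCount_succ (a : ℕ) :
    μ.pairCount a a + μ.pairCount (a + 1 : ℕ) (a + 1 : ℕ)
      = (if (a, a) ∈ μ then 1 else 0) + μ.pairCount (a + 1 : ℕ) a
        + μ.pairCount a (a + 1 : ℕ) := by
  simp only [pairCount_natCast]
  rw [card_filter_add_mem_eq_add_colLen μ a a, card_filter_add_mem_eq_add_colLen μ (a + 1) a]
  split_ifs with h <;> rw [mem_iff_lt_colLen] at h <;> omega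

end YoungDiagram

open YoungDiagram

theorem coeff_hLam (μ : YoungDiagram) (m : ℤ) :
    (hLam μ).coeff m = #{c ∈ μ.cells | c.1 = c.2 ∧ 1 ≤ c.1 ∧ -(c.1 : ℤ) = m}
      - if m = 0 ∨ m = 1 then 0 else (μ.pairCount m m - μ.pairCount (m - 1) m : ℤ) := by
  simp only [hLam, AddMonoidAlgebra.coeff_add, AddMonoidAlgebra.coeff_sub,
    AddMonoidAlgebra.coeff_sum, Finsupp.coe_add, Finsupp.coe_sub, Finsupp.coe_finsetSum,
    Pi.add_apply, Pi.sub_apply, Finset.sum_apply, T_apply, sum_boole, filter_filter, and_assoc]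
  split_ifs with hm
  · rw [filter_false_of_mem (s := μ.cells ×ˢ μ.cells) fun p _ => by omega,
      filter_false_of_mem (s := μ.cells ×ˢ μ.cells) fun p _ => by omega]
    simp
  · rw [sub_sub_eq_add_sub, sub_add_eq_add_sub, pairCount, pairCount]
    congr 3
    · exact congrArg card (filter_congr fun p _ => by omega)
    · exact filter_congr fun p _ => by omega

theorem coeff_hLam_one_sub (μ : YoungDiagram) (m : ℤ) :
    (hLam μ).coeff (1 - m) = -(hLam μ).coeff m := by
  wlog hm : m ≤ 0 generalizing m
  · rw [← neg_eq_iff_eq_neg, ← this (1 - m) (by omega), sub_sub_cancel]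
  have hdiag_one_sub : #{c ∈ μ.cells | c.1 = c.2 ∧ 1 ≤ c.1 ∧ -(c.1 : ℤ) = 1 - m} = 0 :=
    card_eq_zero.mpr (filter_false_of_mem fun c _ => by omega)
  obtain ⟨a, rfl⟩ : ∃ a : ℕ, m = -a := ⟨m.natAbs, by omega⟩
  rw [coeff_hLam, coeff_hLam, hdiag_one_sub]
  rcases Nat.eq_zero_or_pos a with rfl | ha
  · rw [card_eq_zero.mpr (filter_false_of_mem fun c _ => by omega)]
    simp
  have hdiag_neg : #{c ∈ μ.cells | c.1 = c.2 ∧ 1 ≤ c.1 ∧ -(c.1 : ℤ) = -a}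
      = if (a, a) ∈ μ then 1 else 0 := by
    rw [filter_congr (q := (· = (a, a))) fun c _ => by grind, filter_eq', apply_ite card]
    simp
  rw [if_neg (by omega), if_neg (by omega), hdiag_neg, show (1 : ℤ) - -a - 1 = a by ring,
    show (1 : ℤ) - -a = ((a + 1 : ℕ) : ℤ) by push_cast; ring,
    show -(a : ℤ) - 1 = -((a + 1 : ℕ) : ℤ) by push_cast; ring, pairCount_neg, pairCount_neg]
  have := μ.pairCount_add_pairCount_succ a
  split_ifs at * <;> omega

/-- **Lemma.** For every Young diagram `μ` there is a Laurent polynomial `B(t)` with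
`h_μ(t) = B(t) − t·B(t⁻¹)`. -/
theorem hLam_eq_B_sub_T_mul_invert_B (μ : YoungDiagram) :
    ∃ B : LaurentPolynomial ℤ, hLam μ = B - T 1 * laurentInvert B :=
  exists_eq_sub_T_one_mul_invert_of_coeff_one_sub (hLam μ) (coeff_hLam_one_sub μ)
end

section
/- Let λ be a Young diagram. Then the following identity of integers holds: ∏_{(i,j)∈λ, i≠j} (j−i) · ∏_{((i,j),(l,k))∈λ×λ, 1+i−j+k−l≠0} (1+i−j+k−l) = σ(λ) · (∏_{□∈λ} h(□)) · ∏_{((i,j),(l,k))∈λ×λ, i−j+k−l≠0} (i−j+k−l). -/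
/-!
Write `c(i, j) = j - i` for the content of a cell and `|x|⁺` for `|x|` read as `1` at `x = 0`.
Stripped of its signs, which `σ` collects, the identity says
`∏ |c(□)|⁺ · ∏ |1 + c(□') - c(□)|⁺ = ∏ h(□) · ∏ |c(□') - c(□)|⁺`.
This is proved by induction, removing the last cell `(r, q)` of the last row; let `c = q - r`
be its content and `ν` the remaining diagram. With `F(t) = ∏_{□ ∈ ν} |t - c(□)|⁺`, the three
content products gain the factors `|c|⁺`, `F(c - 1) F(c + 1)` and `F(c)²`, while the hook
product gains `(q + 1) ∏_{i < r} (λ_i - i - c) / (λ_i - i - c - 1)` from row `r` and column `q`.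
Evaluating `F(t + 1) / F(t)` row by row, each row of `ν` telescopes to a single factor, and
`|c|⁺ F(c - 1) F(c + 1) / F(c)²` becomes the same ratio.
-/

/-- The sign `σ(μ) ∈ {±1}`:
`σ(μ) = ∏_{(i,j)∈μ, i≠j} sgn(j−i)
  · ∏_{((i,j),(l,k))∈μ×μ, 1+i−j+k−l≠0} sgn(1+i−j+k−l)
  · ∏_{((i,j),(l,k))∈μ×μ, i−j+k−l≠0} sgn(i−j+k−l)`. -/
def youngSigma (μ : YoungDiagram) : ℤ :=
  (∏ c ∈ μ.cells.filter (fun c => c.1 ≠ c.2), ((c.2 : ℤ) - c.1).sign)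
  * (∏ p ∈ (μ.cells ×ˢ μ.cells).filter
      (fun p => (1 : ℤ) + p.1.1 - p.1.2 + p.2.2 - p.2.1 ≠ 0),
      ((1 : ℤ) + p.1.1 - p.1.2 + p.2.2 - p.2.1).sign)
  * (∏ p ∈ (μ.cells ×ˢ μ.cells).filter
      (fun p => (p.1.1 : ℤ) - p.1.2 + p.2.2 - p.2.1 ≠ 0),
      ((p.1.1 : ℤ) - p.1.2 + p.2.2 - p.2.1).sign)

open Finset

namespace Finset

lemma prod_range_sub_mul {M : Type*} [CommMonoid M] (f : ℤ → M) (x : ℤ) (n : ℕ) :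
    (∏ j ∈ range n, f (x - j)) * f (x - n) = f x * ∏ j ∈ range n, f (x - 1 - j) := by
  rw [← prod_range_succ (fun j : ℕ => f (x - j)), prod_range_succ', mul_comm]
  push_cast
  simp only [sub_zero, sub_add_eq_sub_sub_swap]

lemma prod_range_add_mul {M : Type*} [CommMonoid M] (f : ℤ → M) (x : ℤ) (n : ℕ) :
    (∏ i ∈ range n, f (x + 1 + i)) * f x = f (x + n) * ∏ i ∈ range n, f (x + i) := by
  rw [mul_comm (f (x + n)), ← prod_range_succ (fun i : ℕ => f (x + i)), prod_range_succ']
  push_cast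
  rw [add_zero]
  congr 1
  exact prod_congr rfl fun i _ => by ring_nf

lemma prod_mul_eq_prod_mul_of_eq_of_ne {ι M : Type*} [CommMonoid M] [DecidableEq ι]
    {s : Finset ι} {a : ι} (ha : a ∈ s) {f g : ι → M} (hfg : ∀ x ∈ s, x ≠ a → f x = g x) :
    (∏ x ∈ s, f x) * g a = (∏ x ∈ s, g x) * f a := by
  rw [← mul_prod_erase s f ha, ← mul_prod_erase s g ha,
    prod_congr rfl fun x hx => hfg x (mem_of_mem_erase hx) (ne_of_mem_erase hx)]
  ac_rfl

end Finset

namespace SignedHook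

/-- Products of `nzAbs` skip the zero factors, as the products of the theorem do. -/
def nzAbs (x : ℤ) : ℤ := if x = 0 then 1 else |x|

lemma nzAbs_pos (x : ℤ) : 0 < nzAbs x := by
  unfold nzAbs
  split_ifs with h
  · exact one_pos
  · exact abs_pos.mpr h

lemma nzAbs_zero : nzAbs 0 = 1 := by simp [nzAbs]

lemma nzAbs_one : nzAbs 1 = 1 := by simp [nzAbs]

lemma nzAbs_neg (x : ℤ) : nzAbs (-x) = nzAbs x := by simp [nzAbs]

lemma nzAbs_of_pos {x : ℤ} (hx : 0 < x) : nzAbs x = x := by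
  simp [nzAbs, hx.ne', abs_of_pos hx]

lemma prod_nzAbs_ne_zero {α : Type*} (s : Finset α) (g : α → ℤ) :
    ∏ x ∈ s, nzAbs (g x) ≠ 0 :=
  prod_ne_zero_iff.mpr fun x _ => (nzAbs_pos (g x)).ne'

lemma prod_filter_ne_zero_eq_sign_mul {α : Type*} (s : Finset α) (g : α → ℤ) :
    ∏ x ∈ s with g x ≠ 0, g x
      = (∏ x ∈ s with g x ≠ 0, (g x).sign) * ∏ x ∈ s, nzAbs (g x) := by
  rw [← prod_filter_of_ne (f := fun x => nzAbs (g x)) (p := fun x => g x ≠ 0)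
    fun x _ h hx => h (by rw [hx, nzAbs_zero]), ← prod_mul_distrib]
  refine prod_congr rfl fun x hx => ?_
  rw [nzAbs, if_neg (mem_filter.mp hx).2, Int.sign_mul_abs]

lemma sign_mul_prod_filter_ne_zero {α : Type*} (s : Finset α) (g : α → ℤ) :
    (∏ x ∈ s with g x ≠ 0, (g x).sign) * ∏ x ∈ s with g x ≠ 0, g x = ∏ x ∈ s, nzAbs (g x) := by
  rw [prod_filter_ne_zero_eq_sign_mul, ← mul_assoc, ← prod_mul_distrib,
    prod_eq_one fun x hx => ?_, one_mul]
  rw [← Int.sign_mul]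
  exact Int.sign_eq_one_of_pos (mul_self_pos.mpr (mem_filter.mp hx).2)

lemma prod_filter_ne_zero_mul_eq_of_prod_nzAbs {α β γ : Type*} {s : Finset α} {t : Finset β}
    {u : Finset γ} {f : α → ℤ} {g : β → ℤ} {k : γ → ℤ} {h : ℤ}
    (habs : (∏ x ∈ s, nzAbs (f x)) * ∏ y ∈ t, nzAbs (g y) = h * ∏ z ∈ u, nzAbs (k z)) :
    (∏ x ∈ s with f x ≠ 0, f x) * ∏ y ∈ t with g y ≠ 0, g y
      = (∏ x ∈ s with f x ≠ 0, (f x).sign) * (∏ y ∈ t with g y ≠ 0, (g y).sign)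
          * (∏ z ∈ u with k z ≠ 0, (k z).sign) * h * ∏ z ∈ u with k z ≠ 0, k z := by
  rw [prod_filter_ne_zero_eq_sign_mul s f, prod_filter_ne_zero_eq_sign_mul t g,
    mul_mul_mul_comm, habs, ← sign_mul_prod_filter_ne_zero u k]
  ring

def content (x : ℕ × ℕ) : ℤ := (x.2 : ℤ) - x.1

def contentProd (s : Finset (ℕ × ℕ)) (t : ℤ) : ℤ := ∏ x ∈ s, nzAbs (t - content x)

def contentDiffProd (s : Finset (ℕ × ℕ)) (d : ℤ) : ℤ :=
  ∏ p ∈ s ×ˢ s, nzAbs (d + content p.2 - content p.1)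

lemma contentProd_insert {b : ℕ × ℕ} {s : Finset (ℕ × ℕ)} (hb : b ∉ s) (t : ℤ) :
    contentProd (insert b s) t = nzAbs (t - content b) * contentProd s t :=
  prod_insert hb

lemma contentDiffProd_insert {b : ℕ × ℕ} {s : Finset (ℕ × ℕ)} (hb : b ∉ s) (d : ℤ) :
    contentDiffProd (insert b s) d
      = nzAbs d * contentProd s (content b - d) * contentProd s (content b + d)
        * contentDiffProd s d := by
  have hrow : ∀ y, nzAbs (d + content y - content b) = nzAbs (content b - d - content y) :=
    fun y => by rw [← nzAbs_neg]; ring_nf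
  have hcol : ∀ x, nzAbs (d + content b - content x) = nzAbs (content b + d - content x) :=
    fun x => by ring_nf
  rw [contentDiffProd, contentDiffProd, prod_product, prod_product, prod_insert hb, prod_insert hb,
    prod_congr rfl fun x _ => prod_insert hb, prod_mul_distrib]
  simp only [add_sub_cancel_right, hrow, hcol, contentProd]
  ring

end SignedHook

namespace YoungDiagram

lemma prod_cells_eq_prod_range_rowLen (μ : YoungDiagram) {L : ℕ} (hL : μ.colLen 0 ≤ L)
    {M : Type*} [CommMonoid M] (f : ℕ × ℕ → M) :
    ∏ x ∈ μ.cells, f x = ∏ i ∈ range L, ∏ j ∈ range (μ.rowLen i), f (i, j) := by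
  refine prod_finset_product _ _ _ fun ⟨i, j⟩ => ?_
  rw [mem_cells, mem_range, mem_range, ← mem_iff_lt_rowLen]
  refine ⟨fun h => ⟨?_, h⟩, And.right⟩
  exact (mem_iff_lt_colLen.mp (μ.up_left_mem le_rfl (Nat.zero_le j) h)).trans_le hL

lemma rowLen_eq_of_forall_mem_iff {μ : YoungDiagram} {i n : ℕ}
    (h : ∀ j, (i, j) ∈ μ ↔ j < n) : μ.rowLen i = n :=
  eq_of_forall_lt_iff fun j => by rw [← mem_iff_lt_rowLen, h]

lemma colLen_eq_of_forall_mem_iff {μ : YoungDiagram} {j n : ℕ}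
    (h : ∀ i, (i, j) ∈ μ ↔ i < n) : μ.colLen j = n :=
  eq_of_forall_lt_iff fun i => by rw [← mem_iff_lt_colLen, h]

section LastCorner

variable {μ ν : YoungDiagram} {r q : ℕ}

lemma exists_last_corner (h : μ.cells.Nonempty) :
    ∃ r q, μ.colLen 0 = r + 1 ∧ μ.rowLen r = q + 1 := by
  obtain ⟨x, hx⟩ := h
  have h0 : 0 < μ.colLen 0 :=
    mem_iff_lt_colLen.mp (μ.up_left_mem (Nat.zero_le _) (Nat.zero_le _) ((mem_cells x).mp hx))
  obtain ⟨r, hr⟩ := Nat.exists_eq_add_one.mpr h0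
  have hr0 : 0 < μ.rowLen r := mem_iff_lt_rowLen.mp (mem_iff_lt_colLen.mpr (by omega))
  obtain ⟨q, hq⟩ := Nat.exists_eq_add_one.mpr hr0
  exact ⟨r, q, hr, hq⟩

lemma colLen_eq_of_le (hr : μ.colLen 0 = r + 1) (hq : μ.rowLen r = q + 1) {j : ℕ}
    (hj : j ≤ q) : μ.colLen j = r + 1 :=
  le_antisymm (hr ▸ μ.colLen_anti 0 j (Nat.zero_le j))
    (mem_iff_lt_colLen.mp (mem_iff_lt_rowLen.mpr (by omega)))

lemma exists_cells_eq_erase (hr : μ.colLen 0 = r + 1) (hq : μ.rowLen r = q + 1) :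
    ∃ ν : YoungDiagram, ν.cells = μ.cells.erase (r, q) := by
  refine ⟨⟨μ.cells.erase (r, q), fun x y hyx hx => ?_⟩, rfl⟩
  simp only [coe_erase, Set.mem_sdiff, mem_coe, mem_cells, Set.mem_singleton_iff] at hx ⊢
  refine ⟨μ.up_left_mem hyx.1 hyx.2 hx.1, ?_⟩
  rintro rfl
  have hcol : x.1 < r + 1 :=
    hr ▸ (mem_iff_lt_colLen.mp hx.1).trans_le (μ.colLen_anti 0 x.2 (Nat.zero_le _))
  have hrow : x.2 < q + 1 := by
    have h1 : x.1 = r := le_antisymm (by omega) hyx.1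
    exact hq ▸ h1 ▸ mem_iff_lt_rowLen.mp hx.1
  exact hx.2 (Prod.ext (le_antisymm (by omega) hyx.1) (le_antisymm (by omega) hyx.2))

lemma mem_of_cells_eq_erase (hν : ν.cells = μ.cells.erase (r, q)) {x : ℕ × ℕ} :
    x ∈ ν ↔ x ≠ (r, q) ∧ x ∈ μ := by
  rw [← mem_cells, hν, mem_erase, mem_cells]

lemma rowLen_of_cells_eq_erase (hν : ν.cells = μ.cells.erase (r, q)) {i : ℕ} (hi : i ≠ r) :
    ν.rowLen i = μ.rowLen i :=
  rowLen_eq_of_forall_mem_iff fun j => by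
    rw [mem_of_cells_eq_erase hν, mem_iff_lt_rowLen]
    simp [hi]

lemma rowLen_of_cells_eq_erase_self (hq : μ.rowLen r = q + 1)
    (hν : ν.cells = μ.cells.erase (r, q)) : ν.rowLen r = q :=
  rowLen_eq_of_forall_mem_iff fun j => by
    rw [mem_of_cells_eq_erase hν, mem_iff_lt_rowLen, hq]
    simp only [ne_eq, Prod.mk.injEq, true_and]
    omega

lemma colLen_of_cells_eq_erase (hν : ν.cells = μ.cells.erase (r, q)) {j : ℕ} (hj : j ≠ q) :
    ν.colLen j = μ.colLen j :=
  colLen_eq_of_forall_mem_iff fun i => by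
    rw [mem_of_cells_eq_erase hν, mem_iff_lt_colLen]
    simp [hj]

lemma colLen_of_cells_eq_erase_self (hr : μ.colLen 0 = r + 1) (hq : μ.rowLen r = q + 1)
    (hν : ν.cells = μ.cells.erase (r, q)) : ν.colLen q = r :=
  colLen_eq_of_forall_mem_iff fun i => by
    rw [mem_of_cells_eq_erase hν, mem_iff_lt_colLen, colLen_eq_of_le hr hq le_rfl]
    simp only [ne_eq, Prod.mk.injEq, and_true]
    omega

lemma colLen_zero_le_of_cells_eq_erase (hr : μ.colLen 0 = r + 1)
    (hν : ν.cells = μ.cells.erase (r, q)) : ν.colLen 0 ≤ r + 1 := by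
  by_contra! h
  have := ((mem_of_cells_eq_erase hν).mp (mem_iff_lt_colLen.mpr h)).2
  exact absurd (mem_iff_lt_colLen.mp this) (by omega)

end LastCorner

end YoungDiagram

namespace SignedHook

open YoungDiagram

def hookLength (μ : YoungDiagram) (x : ℕ × ℕ) : ℤ :=
  (μ.rowLen x.1 : ℤ) + (μ.colLen x.2 : ℤ) - x.1 - x.2 - 1

def hookProd (μ : YoungDiagram) : ℤ := ∏ x ∈ μ.cells, hookLength μ x

/-- `t + i - ρ.rowLen i = t - content (i, ρ.rowLen i)`, the cell just past the end of row `i`. -/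
def rowEndProd (ρ : YoungDiagram) (L : ℕ) (t : ℤ) : ℤ :=
  ∏ i ∈ range L, nzAbs (t + i - ρ.rowLen i)

lemma contentProd_add_one_mul_rowEndProd (ρ : YoungDiagram) {L : ℕ} (hL : ρ.colLen 0 ≤ L)
    (t : ℤ) :
    contentProd ρ.cells (t + 1) * rowEndProd ρ L (t + 1)
      = contentProd ρ.cells t * ∏ i ∈ range L, nzAbs (t + 1 + i) := by
  have hrows : ∀ s, contentProd ρ.cells s
      = ∏ i ∈ range L, ∏ j ∈ range (ρ.rowLen i), nzAbs (s + i - j) := fun s => by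
    rw [contentProd, ρ.prod_cells_eq_prod_range_rowLen hL]
    exact prod_congr rfl fun i _ => prod_congr rfl fun j _ => by unfold content; ring_nf
  rw [hrows, hrows, rowEndProd, ← prod_mul_distrib, ← prod_mul_distrib]
  refine prod_congr rfl fun i _ => ?_
  rw [prod_range_sub_mul nzAbs, mul_comm]
  congr 1
  exact prod_congr rfl fun j _ => by ring_nf

section LastCorner

variable {μ ν : YoungDiagram} {r q : ℕ}

lemma prod_hookLength_row_mul_of_lt (hr : μ.colLen 0 = r + 1) (hq : μ.rowLen r = q + 1)
    (hν : ν.cells = μ.cells.erase (r, q)) {i : ℕ} (hi : i < r) :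
    (∏ j ∈ range (μ.rowLen i), hookLength μ (i, j)) * nzAbs (q - r + 1 + i - ν.rowLen i)
      = (∏ j ∈ range (ν.rowLen i), hookLength ν (i, j)) * nzAbs (q - r + i - ν.rowLen i) := by
  have hrow := rowLen_of_cells_eq_erase hν hi.ne
  have hlong : q + 1 ≤ μ.rowLen i := hq ▸ μ.rowLen_anti i r hi.le
  have hgap : nzAbs (q - r + 1 + i - ν.rowLen i) = hookLength ν (i, q) := by
    rw [← nzAbs_neg, nzAbs_of_pos (by omega), hookLength, hrow,
      colLen_of_cells_eq_erase_self hr hq hν]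
    ring
  have hgap' : nzAbs (q - r + i - ν.rowLen i) = hookLength μ (i, q) := by
    rw [← nzAbs_neg, nzAbs_of_pos (by omega), hookLength, hrow, colLen_eq_of_le hr hq le_rfl]
    push_cast
    ring
  rw [hgap, hgap', hrow]
  refine prod_mul_eq_prod_mul_of_eq_of_ne (f := fun j => hookLength μ (i, j))
    (g := fun j => hookLength ν (i, j)) (mem_range.mpr hlong) fun j _ hj => ?_
  rw [hookLength, hookLength, hrow, colLen_of_cells_eq_erase hν hj]

lemma prod_hookLength_row_last (hr : μ.colLen 0 = r + 1) (hq : μ.rowLen r = q + 1)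
    (hν : ν.cells = μ.cells.erase (r, q)) :
    ∏ j ∈ range (μ.rowLen r), hookLength μ (r, j)
      = (q + 1) * ∏ j ∈ range (ν.rowLen r), hookLength ν (r, j) := by
  rw [hq, rowLen_of_cells_eq_erase_self hq hν, prod_range_succ', mul_comm]
  congr 1
  · rw [hookLength, hq, colLen_eq_of_le hr hq (Nat.zero_le q)]
    push_cast
    ring
  · refine prod_congr rfl fun j hj => ?_
    have hjq : j < q := mem_range.mp hj
    rw [hookLength, hookLength, hq, rowLen_of_cells_eq_erase_self hq hν,
      colLen_of_cells_eq_erase hν hjq.ne, colLen_eq_of_le hr hq hjq.le,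
      colLen_eq_of_le hr hq (by omega)]
    push_cast
    ring

lemma hookProd_mul_rowEndProd (hr : μ.colLen 0 = r + 1) (hq : μ.rowLen r = q + 1)
    (hν : ν.cells = μ.cells.erase (r, q)) :
    hookProd μ * rowEndProd ν (r + 1) (q - r + 1)
      = (q + 1) * hookProd ν * rowEndProd ν (r + 1) (q - r) := by
  rw [hookProd, hookProd, μ.prod_cells_eq_prod_range_rowLen hr.le,
    ν.prod_cells_eq_prod_range_rowLen (colLen_zero_le_of_cells_eq_erase hr hν), rowEndProd,
    rowEndProd, prod_range_succ, prod_range_succ, prod_range_succ, prod_range_succ,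
    prod_hookLength_row_last hr hq hν, rowLen_of_cells_eq_erase_self hq hν]
  have hrows := prod_congr rfl fun i hi => prod_hookLength_row_mul_of_lt hr hq hν (mem_range.mp hi)
  rw [prod_mul_distrib, prod_mul_distrib] at hrows
  have h1 : (q : ℤ) - r + 1 + r - q = 1 := by ring
  have h0 : (q : ℤ) - r + r - q = 0 := by ring
  rw [h1, h0, nzAbs_one, nzAbs_zero]
  linear_combination (q + 1 : ℤ) * (∏ j ∈ range q, hookLength ν (r, j)) * hrows

lemma eq_hookProd_mul_contentProd_sq (hr : μ.colLen 0 = r + 1) (hq : μ.rowLen r = q + 1)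
    (hν : ν.cells = μ.cells.erase (r, q)) :
    nzAbs (q - r) * contentProd ν.cells (q - r - 1) * contentProd ν.cells (q - r + 1)
        * hookProd ν
      = hookProd μ * contentProd ν.cells (q - r) ^ 2 := by
  set c : ℤ := q - r
  have hL := colLen_zero_le_of_cells_eq_erase hr hν
  have hshift := contentProd_add_one_mul_rowEndProd ν hL c
  have hshift' := contentProd_add_one_mul_rowEndProd ν hL (c - 1)
  rw [sub_add_cancel] at hshift'
  have htele := prod_range_add_mul nzAbs c (r + 1)
  have hlast : nzAbs (c + (r + 1 : ℕ)) = q + 1 := by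
    rw [nzAbs_of_pos (by push_cast; omega)]
    push_cast
    ring
  rw [hlast] at htele
  have hhook : hookProd μ * rowEndProd ν (r + 1) (c + 1)
      = (q + 1) * hookProd ν * rowEndProd ν (r + 1) c := hookProd_mul_rowEndProd hr hq hν
  have hcontent : nzAbs c * contentProd ν.cells (c - 1) * contentProd ν.cells (c + 1)
        * rowEndProd ν (r + 1) (c + 1)
      = (q + 1) * contentProd ν.cells c ^ 2 * rowEndProd ν (r + 1) c := by
    refine mul_right_cancel₀ (prod_nzAbs_ne_zero (range (r + 1)) fun i : ℕ => c + i) ?_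
    linear_combination (nzAbs c * contentProd ν.cells (c - 1)
        * ∏ i ∈ range (r + 1), nzAbs (c + i)) * hshift
      - (contentProd ν.cells c * nzAbs c * ∏ i ∈ range (r + 1), nzAbs (c + 1 + i)) * hshift'
      + (contentProd ν.cells c ^ 2 * rowEndProd ν (r + 1) c) * htele
  have hend : rowEndProd ν (r + 1) (c + 1) ≠ 0 := prod_nzAbs_ne_zero _ _
  refine mul_right_cancel₀ hend ?_
  linear_combination hookProd ν * hcontent - contentProd ν.cells c ^ 2 * hhook

lemma contentProd_mul_contentDiffProd_of_cells_eq_erase (hr : μ.colLen 0 = r + 1)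
    (hq : μ.rowLen r = q + 1) (hν : ν.cells = μ.cells.erase (r, q))
    (ih : contentProd ν.cells 0 * contentDiffProd ν.cells 1
      = hookProd ν * contentDiffProd ν.cells 0) :
    contentProd μ.cells 0 * contentDiffProd μ.cells 1
      = hookProd μ * contentDiffProd μ.cells 0 := by
  have hmem : (r, q) ∈ μ.cells := (mem_cells _).mpr (mem_iff_lt_rowLen.mpr (by omega))
  have hnot : (r, q) ∉ ν.cells := hν ▸ notMem_erase _ _
  have hcontent : content (r, q) = q - r := rfl
  rw [← insert_erase hmem, ← hν, contentProd_insert hnot, contentDiffProd_insert hnot,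
    contentDiffProd_insert hnot, hcontent, zero_sub, nzAbs_neg, nzAbs_one, nzAbs_zero, add_zero,
    sub_zero]
  linear_combination (nzAbs (q - r) * contentProd ν.cells (q - r - 1)
      * contentProd ν.cells (q - r + 1)) * ih
    + contentDiffProd ν.cells 0 * eq_hookProd_mul_contentProd_sq hr hq hν

end LastCorner

theorem contentProd_mul_contentDiffProd (μ : YoungDiagram) :
    contentProd μ.cells 0 * contentDiffProd μ.cells 1 = hookProd μ * contentDiffProd μ.cells 0 := by
  induction hn : μ.cells.card generalizing μ with
  | zero => simp [card_eq_zero.mp hn, contentProd, contentDiffProd, hookProd]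
  | succ n ih =>
    obtain ⟨r, q, hr, hq⟩ := exists_last_corner (card_pos.mp (by rw [hn]; exact n.succ_pos))
    obtain ⟨ν, hν⟩ := exists_cells_eq_erase hr hq
    refine contentProd_mul_contentDiffProd_of_cells_eq_erase hr hq hν (ih ν ?_)
    rw [hν, card_erase_of_mem ((mem_cells _).mpr (mem_iff_lt_rowLen.mpr (by omega))), hn]
    rfl

end SignedHook

open SignedHook

/-- **Lemma (signed hook-length identity).** For a Young diagram `μ`,
`∏_{(i,j)∈μ, i≠j} (j−i) · ∏_{((i,j),(l,k))∈μ×μ, 1+i−j+k−l≠0} (1+i−j+k−l)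
  = σ(μ) · (∏_{□∈μ} h(□)) · ∏_{((i,j),(l,k))∈μ×μ, i−j+k−l≠0} (i−j+k−l)`,
where `h(i,j) = μ_i + μ̄_j − i − j − 1` is the hook length. -/
theorem youngDiagram_signed_hook_identity (μ : YoungDiagram) :
    (∏ c ∈ μ.cells.filter (fun c => c.1 ≠ c.2), ((c.2 : ℤ) - c.1))
      * (∏ p ∈ (μ.cells ×ˢ μ.cells).filter
          (fun p => (1 : ℤ) + p.1.1 - p.1.2 + p.2.2 - p.2.1 ≠ 0),
          ((1 : ℤ) + p.1.1 - p.1.2 + p.2.2 - p.2.1))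
    = youngSigma μ
      * (∏ c ∈ μ.cells, ((μ.rowLen c.1 : ℤ) + (μ.colLen c.2 : ℤ) - c.1 - c.2 - 1))
      * (∏ p ∈ (μ.cells ×ˢ μ.cells).filter
          (fun p => (p.1.1 : ℤ) - p.1.2 + p.2.2 - p.2.1 ≠ 0),
          ((p.1.1 : ℤ) - p.1.2 + p.2.2 - p.2.1)) := by
  have hdiag : μ.cells.filter (fun c => c.1 ≠ c.2)
      = μ.cells.filter (fun c => (c.2 : ℤ) - c.1 ≠ 0) :=
    filter_congr fun c _ => by omega
  rw [youngSigma, hdiag]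
  refine prod_filter_ne_zero_mul_eq_of_prod_nzAbs ?_
  convert contentProd_mul_contentDiffProd μ using 2
  · rw [contentProd]
    exact prod_congr rfl fun c _ => by rw [content, zero_sub, nzAbs_neg]
  · rw [contentDiffProd]
    exact prod_congr rfl fun p _ => by rw [content, content]; ring_nf
  · rfl
  · rw [contentDiffProd]
    exact prod_congr rfl fun p _ => by rw [content, content]; ring_nf
end

section
/- Let λ be a Young diagram. Then the following identity of natural numbers holds: ∏_{(i,j)∈λ, i≠j} |j−i| · ∏_{((i,j),(l,k))∈λ×λ, 1+i−j+k−l≠0} |1+i−j+k−l| = (∏_{□∈λ} h(□)) · ∏_{((i,j),(l,k))∈λ×λ, i−j+k−l≠0} |i−j+k−l|. -/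
/-!
Encode `μ` by its Maya diagram, the set of bead positions `λ_i - i`. Counting cells along
diagonals, the bead indicator at `c` is `[c ≤ 0] - (N c - N (c - 1))`, where `N c` is the number
of cells of content `c`; applied to the transpose, the same formula shows that the gaps are the
positions `1 - (λ̄_j - j)`. The cell `(i, j)` has hook length `(λ_i - i) - (1 - (λ̄_j - j))`, so
the cells with hook length `m` are the (gap, bead) pairs at distance `m`. Substituting the two
indicator formulas into the count of these pairs and summing by parts gives, for `m ≥ 1`,
  `#{hooks = m} = N m + N (-m) + D (m + 1) + D (m - 1) - 2 D m`,
where `D e` counts pairs of cells whose contents differ by `e`. This is the equality of the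
multiplicities of each factor `m ≥ 1` on the two sides.
-/

open Finset

theorem Finset.sum_Ioc_sub_sub_one {M : Type*} [AddCommGroup M] (g : ℤ → M) {a b : ℤ}
    (hab : a ≤ b) : ∑ c ∈ Ioc a b, (g c - g (c - 1)) = g b - g a := by
  induction b, hab using Int.leInduction with
  | base => simp
  | succ b hab ih =>
    rw [← insert_Ioc_right_eq_Ioc_add_one hab, sum_insert (by simp), ih, add_sub_cancel_right]
    abel

theorem Finset.prod_mul_prod_eq_of_card_filter_eq {ι₁ ι₂ κ₁ κ₂ M : Type*} [CommMonoid M]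
    [DecidableEq M] {s₁ : Finset ι₁} {s₂ : Finset ι₂} {t₁ : Finset κ₁} {t₂ : Finset κ₂}
    {f₁ : ι₁ → M} {f₂ : ι₂ → M} {g₁ : κ₁ → M} {g₂ : κ₂ → M}
    (h : ∀ k, #{i ∈ s₁ | f₁ i = k} + #{i ∈ s₂ | f₂ i = k}
      = #{j ∈ t₁ | g₁ j = k} + #{j ∈ t₂ | g₂ j = k}) :
    (∏ i ∈ s₁, f₁ i) * ∏ i ∈ s₂, f₂ i = (∏ j ∈ t₁, g₁ j) * ∏ j ∈ t₂, g₂ j := by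
  simp only [prod_eq_multiset_prod, ← Multiset.prod_add]
  congr 1
  ext k
  simp only [Multiset.count_add, Multiset.count_map, eq_comm (a := k)]
  exact h k

theorem Finset.card_filter_natAbs_eq {α : Type*} (s : Finset α) (g : α → ℤ) {P : α → Prop}
    [DecidablePred P] (hP : ∀ x ∈ s, P x ↔ g x ≠ 0) {k : ℕ} (hk : k ≠ 0) :
    #{x ∈ {x ∈ s | P x} | (g x).natAbs = k} = #{x ∈ s | g x = k} + #{x ∈ s | g x = -k} := by
  classical
  rw [← card_union_of_disjoint (disjoint_filter.2 fun x _ h => by omega), ← filter_or,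
    filter_filter]
  exact congrArg card (filter_congr fun x hx => by rw [hP x hx]; omega)

theorem Finset.card_filter_natAbs_eq_zero {α : Type*} (s : Finset α) (g : α → ℤ) {P : α → Prop}
    [DecidablePred P] (hP : ∀ x ∈ s, P x → g x ≠ 0) :
    #{x ∈ {x ∈ s | P x} | (g x).natAbs = 0} = 0 :=
  card_eq_zero.2 <| filter_eq_empty_iff.2 fun x hx h =>
    hP x (mem_filter.1 hx).1 (mem_filter.1 hx).2 (Int.natAbs_eq_zero.1 h)

namespace YoungDiagram

def content (x : ℕ × ℕ) : ℤ := x.2 - x.1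

variable (μ : YoungDiagram)

def contentCount (c : ℤ) : ℕ := #{x ∈ μ.cells | content x = c}

def contentDiffCount (e : ℤ) : ℕ :=
  #{p ∈ μ.cells ×ˢ μ.cells | content p.2 - content p.1 = e}

def hookLength (x : ℕ × ℕ) : ℕ := μ.rowLen x.1 + μ.colLen x.2 - x.1 - x.2 - 1

def mayaPos (i : ℕ) : ℤ := μ.rowLen i - i

def maya : Set ℤ := Set.range μ.mayaPos

theorem exists_mayaPos_lt (x : ℤ) : ∃ i, μ.mayaPos i < x :=
  ⟨μ.rowLen 0 + (1 - x).toNat, by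
    have := μ.rowLen_anti 0 (μ.rowLen 0 + (1 - x).toNat); unfold mayaPos; omega⟩

noncomputable def mayaCount (x : ℤ) : ℕ := Nat.find (μ.exists_mayaPos_lt x)

variable {μ}

theorem mayaPos_strictAnti : StrictAnti μ.mayaPos := fun i j hij => by
  have := μ.rowLen_anti i j hij.le; unfold mayaPos; omega

theorem mayaPos_le_rowLen_zero (i : ℕ) : μ.mayaPos i ≤ μ.rowLen 0 := by
  have := μ.rowLen_anti 0 i i.zero_le; unfold mayaPos; omega

theorem mayaPos_transpose (j : ℕ) : μ.transpose.mayaPos j = μ.colLen j - j := by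
  rw [mayaPos, rowLen_transpose]

theorem mem_iff_content_lt_mayaPos {x : ℕ × ℕ} : x ∈ μ ↔ content x < μ.mayaPos x.1 := by
  rw [mem_iff_lt_rowLen, content, mayaPos]; omega

theorem mem_iff_pos_mayaPos_add_mayaPos {i j : ℕ} :
    (i, j) ∈ μ ↔ 0 < μ.mayaPos i + μ.transpose.mayaPos j := by
  rw [mayaPos_transpose, mayaPos]
  by_cases h : (i, j) ∈ μ
  · have := μ.mem_iff_lt_rowLen.1 h
    have := μ.mem_iff_lt_colLen.1 h
    simp only [h, true_iff]; omega
  · have := mt μ.mem_iff_lt_rowLen.2 h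
    have := mt μ.mem_iff_lt_colLen.2 h
    simp only [h, false_iff]; omega

theorem natCast_hookLength {x : ℕ × ℕ} (hx : x ∈ μ) :
    (μ.hookLength x : ℤ) = μ.mayaPos x.1 + μ.transpose.mayaPos x.2 - 1 := by
  have hrow := μ.mem_iff_lt_rowLen.1 hx
  have hcol := μ.mem_iff_lt_colLen.1 hx
  rw [hookLength, mayaPos_transpose, mayaPos]; omega

theorem hookLength_pos {x : ℕ × ℕ} (hx : x ∈ μ) : 0 < μ.hookLength x := by
  have := μ.mem_iff_lt_rowLen.1 hx
  have := μ.mem_iff_lt_colLen.1 hx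
  unfold hookLength; omega

theorem lt_mayaCount_iff {x : ℤ} {i : ℕ} : i < μ.mayaCount x ↔ x ≤ μ.mayaPos i := by
  refine ⟨fun h => not_lt.1 (Nat.find_min _ h), fun h => ?_⟩
  by_contra! hle
  exact (h.trans (mayaPos_strictAnti.antitone hle)).not_gt (Nat.find_spec (μ.exists_mayaPos_lt x))

theorem mayaCount_eq_add_indicator (x : ℤ) :
    (μ.mayaCount x : ℤ) = μ.mayaCount (x + 1) + μ.maya.indicator 1 x := by
  by_cases hx : x ∈ μ.maya
  · obtain ⟨i, rfl⟩ := hx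
    have h₁ : μ.mayaCount (μ.mayaPos i + 1) = i := eq_of_forall_lt_iff fun k => by
      rw [lt_mayaCount_iff, Int.add_one_le_iff, mayaPos_strictAnti.lt_iff_gt]
    have h₀ : μ.mayaCount (μ.mayaPos i) = i + 1 := eq_of_forall_lt_iff fun k => by
      rw [lt_mayaCount_iff, mayaPos_strictAnti.le_iff_ge, Nat.lt_succ_iff]
    rw [h₀, h₁, Set.indicator_of_mem (show μ.mayaPos i ∈ μ.maya from ⟨i, rfl⟩)]
    push_cast; rfl
  · have : μ.mayaCount x = μ.mayaCount (x + 1) := eq_of_forall_lt_iff fun k => by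
      rw [lt_mayaCount_iff, lt_mayaCount_iff, Int.add_one_le_iff,
        (show x ≠ μ.mayaPos k from fun h => hx ⟨k, h.symm⟩).le_iff_lt]
    rw [this, Set.indicator_of_notMem hx, add_zero]

theorem content_mem_Ioo {x : ℕ × ℕ} (hx : x ∈ μ) :
    content x ∈ Set.Ioo (-(μ.colLen 0 : ℤ)) (μ.rowLen 0) := by
  have := μ.mem_iff_lt_rowLen.1 hx
  have := μ.mem_iff_lt_colLen.1 hx
  have := μ.rowLen_anti 0 x.1 x.1.zero_le
  have := μ.colLen_anti 0 x.2 x.2.zero_le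
  constructor <;> unfold content <;> omega

theorem contentCount_eq_zero {c : ℤ} (hc : c ∉ Set.Ioo (-(μ.colLen 0 : ℤ)) (μ.rowLen 0)) :
    μ.contentCount c = 0 :=
  card_eq_zero.2 <| filter_eq_empty_iff.2 fun _ hx hxc => hc (hxc ▸ content_mem_Ioo hx)

theorem contentCount_eq_mayaCount_sub (c : ℤ) :
    (μ.contentCount c : ℤ) = μ.mayaCount (c + 1) - (-c).toNat := by
  have hle : (-c).toNat ≤ μ.mayaCount (c + 1) := by
    by_contra! h
    have := (lt_mayaCount_iff (μ := μ) (x := c + 1)).not.1 (lt_irrefl _)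
    unfold mayaPos at this; omega
  have : μ.contentCount c = #(Ico (-c).toNat (μ.mayaCount (c + 1))) := by
    refine card_nbij' Prod.fst (fun i => (i, (i + c).toNat)) ?_ ?_ ?_ ?_
    · intro x hx
      obtain ⟨hmem, rfl⟩ := mem_filter.1 (mem_coe.1 hx)
      have := lt_mayaCount_iff.2 (Int.add_one_le_iff.2 (mem_iff_content_lt_mayaPos.1 hmem))
      simp only [coe_Ico, Set.mem_Ico, content] at this ⊢
      omega
    · intro i hi
      simp only [coe_Ico, Set.mem_Ico] at hi
      have := lt_mayaCount_iff.1 hi.2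
      refine mem_filter.2 ⟨mem_iff_content_lt_mayaPos.2 ?_, ?_⟩ <;> simp only [content] <;> omega
    · intro x hx
      obtain ⟨-, hc⟩ := mem_filter.1 (mem_coe.1 hx)
      simp only [content] at hc
      exact Prod.ext rfl (by simp only; omega)
    · intro i _
      rfl
  rw [this, Nat.card_Ico]; omega

theorem indicator_maya_eq (c : ℤ) :
    μ.maya.indicator 1 c
      = (if c ≤ 0 then 1 else 0) - ((μ.contentCount c : ℤ) - μ.contentCount (c - 1)) := by
  rw [contentCount_eq_mayaCount_sub, contentCount_eq_mayaCount_sub, sub_add_cancel,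
    mayaCount_eq_add_indicator c]
  split_ifs <;> omega

theorem contentCount_transpose (c : ℤ) : μ.transpose.contentCount c = μ.contentCount (-c) := by
  refine card_nbij' Prod.swap Prod.swap ?_ ?_ (fun _ _ => rfl) (fun _ _ => rfl) <;>
  · intro x hx
    rw [mem_coe, mem_filter] at hx ⊢
    simp only [mem_cells, mem_transpose, content, Prod.fst_swap, Prod.snd_swap,
      Prod.swap_swap] at hx ⊢
    exact ⟨hx.1, by omega⟩

theorem card_hookLength_eq_sum {m : ℕ} (hm : 0 < m) {a b : ℤ} (ha : a ≤ -(μ.colLen 0 : ℤ))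
    (hb : (μ.rowLen 0 : ℤ) ≤ b) :
    (#{x ∈ μ.cells | μ.hookLength x = m} : ℤ)
      = ∑ c ∈ Ioc a b, μ.transpose.maya.indicator 1 (1 - c) * μ.maya.indicator 1 (c + m) := by
  classical
  simp only [Set.indicator_apply, Pi.one_apply, mul_ite, mul_one, mul_zero, ← ite_and,
    ← natCast_card_filter]
  congr 1
  refine card_bij (fun x _ => μ.mayaPos x.1 - m) ?_ ?_ ?_
  · rintro ⟨i, j⟩ hx
    obtain ⟨hmem, hh⟩ := mem_filter.1 hx
    have := natCast_hookLength hmem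
    have := mayaPos_le_rowLen_zero (μ := μ) i
    have := mayaPos_le_rowLen_zero (μ := μ.transpose) j
    rw [rowLen_transpose] at this
    dsimp only at *
    exact mem_filter.2 ⟨mem_Ioc.2 ⟨by omega, by omega⟩, ⟨i, by omega⟩, ⟨j, by omega⟩⟩
  · rintro ⟨i, j⟩ hx ⟨i', j'⟩ hx' h
    obtain ⟨hmem, hh⟩ := mem_filter.1 hx
    obtain ⟨hmem', hh'⟩ := mem_filter.1 hx'
    obtain rfl : i = i' := mayaPos_strictAnti.injective (sub_left_inj.1 h)
    have := natCast_hookLength hmem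
    have := natCast_hookLength hmem'
    dsimp only at *
    have : μ.transpose.mayaPos j = μ.transpose.mayaPos j' := by omega
    rw [mayaPos_strictAnti.injective this]
  · intro c hc
    obtain ⟨-, ⟨i, hi⟩, ⟨j, hj⟩⟩ := mem_filter.1 hc
    have hmem : (i, j) ∈ μ := mem_iff_pos_mayaPos_add_mayaPos.2 (by omega)
    have := natCast_hookLength hmem
    dsimp only at this
    exact ⟨(i, j), mem_filter.2 ⟨hmem, by omega⟩, by dsimp only; omega⟩

theorem contentDiffCount_eq_sum {T : Finset ℤ} {s : ℤ} (hT : ∀ x ∈ μ, content x + s ∈ T)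
    (e : ℤ) :
    μ.contentDiffCount e = ∑ c ∈ T, μ.contentCount (c - s) * μ.contentCount (c - s + e) := by
  rw [contentDiffCount, card_eq_sum_card_fiberwise (f := fun p => content p.1 + s)
    fun p hp => hT _ (mem_product.1 (mem_filter.1 hp).1).1]
  refine sum_congr rfl fun c _ => ?_
  rw [contentCount, contentCount, ← card_product]
  congr 1
  ext ⟨x, y⟩
  simp only [mem_filter, mem_product]
  constructor
  · rintro ⟨⟨⟨hx, hy⟩, he⟩, hc⟩
    exact ⟨⟨hx, by omega⟩, hy, by omega⟩
  · rintro ⟨⟨hx, hxc⟩, hy, hyc⟩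
    exact ⟨⟨⟨hx, hy⟩, by omega⟩, by omega⟩

theorem contentDiffCount_neg (e : ℤ) : μ.contentDiffCount (-e) = μ.contentDiffCount e := by
  refine card_nbij' Prod.swap Prod.swap ?_ ?_ (fun _ _ => rfl) (fun _ _ => rfl) <;>
  · intro p hp
    rw [mem_coe, mem_filter, mem_product] at hp ⊢
    exact ⟨⟨hp.1.2, hp.1.1⟩, by simp only [Prod.fst_swap, Prod.snd_swap]; omega⟩

theorem sum_contentCount_sub_mul_sub {a b : ℤ} (ha : a ≤ -(μ.colLen 0 : ℤ))
    (hb : (μ.rowLen 0 : ℤ) ≤ b) (m : ℤ) :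
    ∑ c ∈ Ioc a b, ((μ.contentCount c : ℤ) - μ.contentCount (c - 1))
        * ((μ.contentCount (c + m) : ℤ) - μ.contentCount (c + m - 1))
      = 2 * μ.contentDiffCount m - μ.contentDiffCount (m + 1) - μ.contentDiffCount (m - 1) := by
  have hsum : ∀ s, 0 ≤ s → s ≤ 1 → ∀ e, (μ.contentDiffCount e : ℤ)
      = ∑ c ∈ Ioc a b, (μ.contentCount (c - s) : ℤ) * μ.contentCount (c - s + e) := by
    intro s hs₀ hs₁ e
    have hT : ∀ x ∈ μ, content x + s ∈ Ioc a b := fun x hx => by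
      have := content_mem_Ioo hx
      rw [Set.mem_Ioo] at this
      exact mem_Ioc.2 ⟨by omega, by omega⟩
    rw [contentDiffCount_eq_sum hT e]
    push_cast; rfl
  -- Each product is written in the shape of `hsum` with shift `s = 0` or `s = 1`.
  have hexp : ∀ c : ℤ, ((μ.contentCount c : ℤ) - μ.contentCount (c - 1))
        * ((μ.contentCount (c + m) : ℤ) - μ.contentCount (c + m - 1))
      = (μ.contentCount (c - 0) : ℤ) * μ.contentCount (c - 0 + m)
        - (μ.contentCount (c - 0) : ℤ) * μ.contentCount (c - 0 + (m - 1))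
        - (μ.contentCount (c - 1) : ℤ) * μ.contentCount (c - 1 + (m + 1))
        + (μ.contentCount (c - 1) : ℤ) * μ.contentCount (c - 1 + m) := by
    intro c
    ring_nf
  simp only [hexp, sum_add_distrib, sum_sub_distrib, ← hsum 0 le_rfl zero_le_one,
    ← hsum 1 zero_le_one le_rfl]
  ring

theorem card_hookLength_eq_contentCount {m : ℕ} (hm : 0 < m) :
    (#{x ∈ μ.cells | μ.hookLength x = m} : ℤ)
      = μ.contentCount m + μ.contentCount (-m) + μ.contentDiffCount (m + 1)
        + μ.contentDiffCount (m - 1) - 2 * μ.contentDiffCount m := by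
  set L : ℤ := (μ.colLen 0 : ℤ)
  set W : ℤ := (μ.rowLen 0 : ℤ)
  have hN : ∀ c, c ≤ -L ∨ W ≤ c → μ.contentCount c = 0 := fun c hc =>
    contentCount_eq_zero (by rw [Set.mem_Ioo]; omega)
  -- The first factor is the gap indicator of `μ` at `c`, namely `[0 < c] + (N c - N (c - 1))`.
  have hexp : ∀ c : ℤ, μ.transpose.maya.indicator 1 (1 - c) * μ.maya.indicator 1 (c + m)
      = (if c + m ≤ 0 then (μ.contentCount c : ℤ) - μ.contentCount (c - 1) else 0)
        - (if 0 < c then (μ.contentCount (c + m) : ℤ) - μ.contentCount (c + m - 1) else 0)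
        - ((μ.contentCount c : ℤ) - μ.contentCount (c - 1))
          * ((μ.contentCount (c + m) : ℤ) - μ.contentCount (c + m - 1)) := by
    intro c
    rw [indicator_maya_eq, indicator_maya_eq, contentCount_transpose, contentCount_transpose,
      neg_sub, show -(1 - c - 1) = c by ring]
    split_ifs <;> first | omega | ring
  have hlow : {c ∈ Ioc (-L - m) W | c + (m : ℤ) ≤ 0} = Ioc (-L - m) (-m) := by
    ext c; simp only [mem_filter, mem_Ioc]; omega
  have hhigh : {c ∈ Ioc (-L - m) W | 0 < c} = Ioc 0 W := by
    ext c; simp only [mem_filter, mem_Ioc]; omega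
  have htop := sum_Ioc_sub_sub_one (fun c => (μ.contentCount (c + m) : ℤ)) (by positivity : 0 ≤ W)
  simp only [sub_add_eq_add_sub, zero_add] at htop
  rw [card_hookLength_eq_sum hm (a := -L - m) (by omega) le_rfl, sum_congr rfl fun c _ => hexp c,
    sum_sub_distrib, sum_sub_distrib, ← sum_filter, ← sum_filter, hlow, hhigh,
    sum_contentCount_sub_mul_sub (by omega) le_rfl,
    sum_Ioc_sub_sub_one (fun c => (μ.contentCount c : ℤ)) (by omega : -L - m ≤ -m), htop,
    hN (-L - m) (by omega), hN (W + m) (by omega)]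
  ring

end YoungDiagram

/-- **Lemma (hook-length identity, absolute values).** For a Young diagram `μ`,
`∏_{(i,j)∈μ, i≠j} |j−i| · ∏_{((i,j),(l,k))∈μ×μ, 1+i−j+k−l≠0} |1+i−j+k−l|
  = (∏_{□∈μ} h(□)) · ∏_{((i,j),(l,k))∈μ×μ, i−j+k−l≠0} |i−j+k−l|`
as natural numbers, where `h(i,j) = μ_i + μ̄_j − i − j − 1` is the hook length. -/
theorem youngDiagram_abs_hook_identity (μ : YoungDiagram) :
    (∏ c ∈ μ.cells.filter (fun c => c.1 ≠ c.2), ((c.2 : ℤ) - c.1).natAbs)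
      * (∏ p ∈ (μ.cells ×ˢ μ.cells).filter
          (fun p => (1 : ℤ) + p.1.1 - p.1.2 + p.2.2 - p.2.1 ≠ 0),
          ((1 : ℤ) + p.1.1 - p.1.2 + p.2.2 - p.2.1).natAbs)
    = (∏ c ∈ μ.cells, (μ.rowLen c.1 + μ.colLen c.2 - c.1 - c.2 - 1))
      * (∏ p ∈ (μ.cells ×ˢ μ.cells).filter
          (fun p => (p.1.1 : ℤ) - p.1.2 + p.2.2 - p.2.1 ≠ 0),
          ((p.1.1 : ℤ) - p.1.2 + p.2.2 - p.2.1).natAbs) := by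
  refine prod_mul_prod_eq_of_card_filter_eq fun k => ?_
  have hhook : #{x ∈ μ.cells | μ.rowLen x.1 + μ.colLen x.2 - x.1 - x.2 - 1 = k}
      = #{x ∈ μ.cells | μ.hookLength x = k} := rfl
  rcases eq_or_ne k 0 with rfl | hk
  · rw [card_filter_natAbs_eq_zero _ _ fun _ _ h => by omega,
      card_filter_natAbs_eq_zero _ _ fun _ _ h => h, card_filter_natAbs_eq_zero _ _ fun _ _ h => h,
      hhook, card_eq_zero.2 <| filter_eq_empty_iff.2 fun _ hx =>
        (YoungDiagram.hookLength_pos hx).ne']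
  have hN (c : ℤ) : #{x ∈ μ.cells | (x.2 : ℤ) - x.1 = c} = μ.contentCount c := rfl
  have hD₁ (e : ℤ) :
      #{p ∈ μ.cells ×ˢ μ.cells | (1 : ℤ) + p.1.1 - p.1.2 + p.2.2 - p.2.1 = e}
        = μ.contentDiffCount (e - 1) :=
    congrArg card <| filter_congr fun p _ => by
      rw [YoungDiagram.content, YoungDiagram.content]; omega
  have hD₀ (e : ℤ) :
      #{p ∈ μ.cells ×ˢ μ.cells | (p.1.1 : ℤ) - p.1.2 + p.2.2 - p.2.1 = e}
        = μ.contentDiffCount e :=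
    congrArg card <| filter_congr fun p _ => by
      rw [YoungDiagram.content, YoungDiagram.content]; omega
  rw [card_filter_natAbs_eq _ _ (fun _ _ => not_congr (by omega)) hk,
    card_filter_natAbs_eq _ _ (fun _ _ => Iff.rfl) hk,
    card_filter_natAbs_eq _ _ (fun _ _ => Iff.rfl) hk, hN, hN, hD₁, hD₁, hD₀, hD₀, hhook,
    YoungDiagram.contentDiffCount_neg, ← neg_add', YoungDiagram.contentDiffCount_neg]
  have := μ.card_hookLength_eq_contentCount (Nat.pos_of_ne_zero hk)
  omega
end

section
/- Let λ be a Young diagram and set D(λ) = Σ_{(a,a)∈λ} a + Σ_{((i,j),(l,k))∈λ×λ, i−l+1 = j−k} (i−l+1) + Σ_{((i,j),(l,k))∈λ×λ, i−l = j−k} (i−l). Then (−1)^{D(λ)} · σ(λ) = 1. -/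
/-- The integer
`D(μ) = Σ_{(a,a)∈μ} a + Σ_{((i,j),(l,k))∈μ×μ, i−l+1 = j−k} (i−l+1)
  + Σ_{((i,j),(l,k))∈μ×μ, i−l = j−k} (i−l)`. -/
def youngD (μ : YoungDiagram) : ℤ :=
  (∑ c ∈ μ.cells.filter (fun c => c.1 = c.2), (c.1 : ℤ))
  + (∑ p ∈ (μ.cells ×ˢ μ.cells).filter
      (fun p => (p.1.1 : ℤ) - p.2.1 + 1 = (p.1.2 : ℤ) - p.2.2),
      ((p.1.1 : ℤ) - p.2.1 + 1))
  + (∑ p ∈ (μ.cells ×ˢ μ.cells).filter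
      (fun p => (p.1.1 : ℤ) - p.2.1 = (p.1.2 : ℤ) - p.2.2),
      ((p.1.1 : ℤ) - p.2.1))

open Finset

lemma prod_sign_filter_ne_zero {α : Type*} (s : Finset α) (f : α → ℤ) :
    ∏ a ∈ s with f a ≠ 0, (f a).sign = (-1) ^ #{a ∈ s | f a < 0} := by
  rw [prod_filter, card_filter, ← prod_pow_eq_pow_sum]
  refine prod_congr rfl fun a _ => ?_
  rcases lt_trichotomy (f a) 0 with h | h | h
  · simp [h, h.ne, Int.sign_eq_neg_one_of_neg]
  · simp [h]
  · simp [h.ne', h.not_gt, Int.sign_eq_one_of_pos h]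

def youngSigmaExponent (μ : YoungDiagram) : ℕ :=
  #{c ∈ μ.cells | (c.2 : ℤ) - c.1 < 0}
  + #{p ∈ μ.cells ×ˢ μ.cells | (1 : ℤ) + p.1.1 - p.1.2 + p.2.2 - p.2.1 < 0}
  + #{p ∈ μ.cells ×ˢ μ.cells | (p.1.1 : ℤ) - p.1.2 + p.2.2 - p.2.1 < 0}

lemma youngSigma_eq_neg_one_pow (μ : YoungDiagram) :
    youngSigma μ = (-1) ^ youngSigmaExponent μ := by
  have hdiag : {c ∈ μ.cells | c.1 ≠ c.2} = {c ∈ μ.cells | (c.2 : ℤ) - c.1 ≠ 0} :=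
    filter_congr fun c _ => by omega
  rw [youngSigma, hdiag, prod_sign_filter_ne_zero, prod_sign_filter_ne_zero,
    prod_sign_filter_ne_zero, youngSigmaExponent, pow_add, pow_add]

def cellContent (x : ℕ × ℕ) : ℤ := x.2 - x.1

def cellWeight (x : ℕ × ℕ) : ℤ :=
  if x.1 = x.2 then x.1 else if cellContent x < 0 then 1 else 0

def adjacentDiagonalWeight (x y : ℕ × ℕ) : ℤ :=
  if cellContent x = cellContent y + 1 then (x.1 : ℤ) - y.1 else 0

def reducedExponent (S : Finset (ℕ × ℕ)) : ℤ :=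
  ∑ x ∈ S, cellWeight x + ∑ x ∈ S, ∑ y ∈ S, adjacentDiagonalWeight x y

lemma sum_sum_eq_zero_of_antisymm {α M : Type*} [AddCommGroup M] [IsAddTorsionFree M]
    (s : Finset α) (f : α → α → M) (hf : ∀ x y, f y x = -f x y) :
    ∑ x ∈ s, ∑ y ∈ s, f x y = 0 := by
  have h : ∑ x ∈ s, ∑ y ∈ s, f x y = -∑ x ∈ s, ∑ y ∈ s, f x y := by
    rw [← sum_neg_distrib]
    nth_rw 1 [sum_comm]
    refine sum_congr rfl fun x _ => ?_
    rw [← sum_neg_distrib]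
    exact sum_congr rfl fun y _ => hf x y
  exact self_eq_neg.mp h

lemma youngD_cell_eq (x : ℕ × ℕ) :
    (if x.1 = x.2 then (x.1 : ℤ) else 0) + (if (x.2 : ℤ) - x.1 < 0 then 1 else 0)
      = cellWeight x := by
  unfold cellWeight cellContent
  split_ifs <;> omega

lemma youngD_pair_eq (x y : ℕ × ℕ) :
    (if (x.1 : ℤ) - y.1 + 1 = (x.2 : ℤ) - y.2 then (x.1 : ℤ) - y.1 + 1 else 0)
      + (if (x.1 : ℤ) - y.1 = (x.2 : ℤ) - y.2 then (x.1 : ℤ) - y.1 else 0)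
      + (if (1 : ℤ) + x.1 - x.2 + y.2 - y.1 < 0 then 1 else 0)
      + (if (x.1 : ℤ) - x.2 + y.2 - y.1 < 0 then 1 else 0)
    = adjacentDiagonalWeight x y
      + (if cellContent x = cellContent y then (x.1 : ℤ) - y.1 else 0)
      + 2 * if cellContent y < cellContent x then 1 else 0 := by
  simp only [adjacentDiagonalWeight, cellContent]
  split_ifs <;> omega

lemma youngD_add_youngSigmaExponent (μ : YoungDiagram) :
    youngD μ + youngSigmaExponent μ = reducedExponent μ.cells
      + 2 * #{p ∈ μ.cells ×ˢ μ.cells | cellContent p.2 < cellContent p.1} := by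
  have hcells := sum_congr rfl fun x (_ : x ∈ μ.cells) => youngD_cell_eq x
  have hpairs :=
    sum_congr rfl fun p (_ : p ∈ μ.cells ×ˢ μ.cells) => youngD_pair_eq p.1 p.2
  have hsame := sum_sum_eq_zero_of_antisymm μ.cells
    (fun x y => if cellContent x = cellContent y then (x.1 : ℤ) - y.1 else 0)
    fun x y => by simp only [eq_comm (a := cellContent y)]; split_ifs <;> ring
  simp only [sum_add_distrib, ← mul_sum] at hcells hpairs
  simp only [youngD, youngSigmaExponent, reducedExponent, sum_filter, natCast_card_filter,
    Nat.cast_add]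
  rw [← sum_product'] at hsame
  rw [sum_product'] at hpairs
  linear_combination hcells + hpairs + hsame

lemma IsLowerSet.diff_singleton_of_maximal {α : Type*} [PartialOrder α] {s : Set α} {x : α}
    (hs : IsLowerSet s) (hx : Maximal (· ∈ s) x) : IsLowerSet (s \ {x}) := by
  rintro a b hba ⟨ha, hax⟩
  refine ⟨hs hba ha, ?_⟩
  rintro rfl
  exact hax (le_antisymm (hx.2 ha hba) hba)

lemma reducedExponent_insert {S : Finset (ℕ × ℕ)} {x : ℕ × ℕ} (hx : x ∉ S) :
    reducedExponent (insert x S) = reducedExponent S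
      + (cellWeight x
        + ∑ y ∈ S, (adjacentDiagonalWeight x y + adjacentDiagonalWeight y x)) := by
  have hself : adjacentDiagonalWeight x x = 0 := by simp [adjacentDiagonalWeight]
  simp only [reducedExponent, sum_insert hx, hself, sum_add_distrib]
  ring

lemma sum_ite_cellContent_eq_sum_range {T : Finset (ℕ × ℕ)} {z : ℕ × ℕ}
    (hT : ∀ y, cellContent y = cellContent z → (y ∈ T ↔ y.1 < z.1)) (g : ℕ × ℕ → ℤ) :
    ∑ y ∈ T, (if cellContent y = cellContent z then g y else 0)
      = ∑ t ∈ range (min z.1 z.2), g (z.1 - 1 - t, z.2 - 1 - t) := by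
  have hdiag : {y ∈ T | cellContent y = cellContent z}
      = (range (min z.1 z.2)).image fun t => (z.1 - 1 - t, z.2 - 1 - t) := by
    ext y
    simp only [mem_filter, mem_image, mem_range]
    constructor
    · rintro ⟨hy, hc⟩
      have := (hT y hc).mp hy
      simp only [cellContent] at hc
      exact ⟨z.1 - 1 - y.1, by omega, Prod.ext (by omega) (by omega)⟩
    · rintro ⟨t, ht, rfl⟩
      have hc : cellContent (z.1 - 1 - t, z.2 - 1 - t) = cellContent z := by
        simp only [cellContent]; omega
      exact ⟨(hT _ hc).mpr (by omega), hc⟩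
  rw [← sum_filter, hdiag, sum_image]
  intro a ha b hb hab
  simp only [coe_range, Set.mem_Iio, Prod.mk.injEq] at ha hb hab
  omega

lemma mem_iff_lt_of_cellContent_eq {S : Set (ℕ × ℕ)} (hS : IsLowerSet S) {x z : ℕ × ℕ}
    (hx : x ∈ S) (hz : z ∉ S) (hzx₁ : z.1 ≤ x.1 + 1) (hzx₂ : z.2 ≤ x.2 + 1) {y : ℕ × ℕ}
    (hy : cellContent y = cellContent z) : y ∈ S ↔ y.1 < z.1 := by
  simp only [cellContent] at hy
  constructor
  · intro hyS
    by_contra h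
    exact hz (hS (Prod.mk_le_mk.mpr ⟨by omega, by omega⟩) hyS)
  · intro h
    exact hS (Prod.mk_le_mk.mpr ⟨by omega, by omega⟩) hx

section Corner

variable {S : Finset (ℕ × ℕ)} {r s : ℕ}

lemma sum_erase_adjacentDiagonalWeight_maximal_left (hS : IsLowerSet (S : Set (ℕ × ℕ)))
    (hx : Maximal (· ∈ S) (r, s)) :
    ∑ y ∈ S.erase (r, s), adjacentDiagonalWeight (r, s) y
      = ∑ t ∈ range (min (r + 1) s), (t : ℤ) := by
  have hbelow : (r + 1, s) ∉ S := fun h => by simpa using hx.2 h (by simp)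
  have hdiag : ∀ y, cellContent y = cellContent (r + 1, s) →
      (y ∈ S.erase (r, s) ↔ y.1 < r + 1) := fun y hy => by
    rw [mem_erase, ← mem_coe, mem_iff_lt_of_cellContent_eq hS hx.1 hbelow le_rfl (by simp) hy,
      and_iff_right]
    rintro rfl
    simp [cellContent] at hy
  calc ∑ y ∈ S.erase (r, s), adjacentDiagonalWeight (r, s) y
      = ∑ y ∈ S.erase (r, s),
          if cellContent y = cellContent (r + 1, s) then (r : ℤ) - y.1 else 0 :=
        sum_congr rfl fun y _ => by
          simp only [adjacentDiagonalWeight, cellContent]; split_ifs <;> omega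
    _ = ∑ t ∈ range (min (r + 1) s), ((r : ℤ) - (r + 1 - 1 - t : ℕ)) :=
        sum_ite_cellContent_eq_sum_range hdiag _
    _ = ∑ t ∈ range (min (r + 1) s), (t : ℤ) :=
        sum_congr rfl fun t ht => by rw [mem_range] at ht; omega

lemma sum_erase_adjacentDiagonalWeight_maximal_right (hS : IsLowerSet (S : Set (ℕ × ℕ)))
    (hx : Maximal (· ∈ S) (r, s)) :
    ∑ y ∈ S.erase (r, s), adjacentDiagonalWeight y (r, s)
      = -∑ t ∈ range (min r (s + 1)), ((t : ℤ) + 1) := by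
  have hright : (r, s + 1) ∉ S := fun h => by simpa using hx.2 h (by simp)
  have hdiag : ∀ y, cellContent y = cellContent (r, s + 1) →
      (y ∈ S.erase (r, s) ↔ y.1 < r) := fun y hy => by
    rw [mem_erase, ← mem_coe, mem_iff_lt_of_cellContent_eq hS hx.1 hright (by simp) le_rfl hy,
      and_iff_right]
    rintro rfl
    simp [cellContent] at hy
  calc ∑ y ∈ S.erase (r, s), adjacentDiagonalWeight y (r, s)
      = ∑ y ∈ S.erase (r, s),
          if cellContent y = cellContent (r, s + 1) then (y.1 : ℤ) - r else 0 :=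
        sum_congr rfl fun y _ => by
          simp only [adjacentDiagonalWeight, cellContent]; split_ifs <;> omega
    _ = ∑ t ∈ range (min r (s + 1)), (((r - 1 - t : ℕ) : ℤ) - r) :=
        sum_ite_cellContent_eq_sum_range hdiag _
    _ = -∑ t ∈ range (min r (s + 1)), ((t : ℤ) + 1) := by
        rw [← sum_neg_distrib]
        exact sum_congr rfl fun t ht => by rw [mem_range] at ht; omega

lemma even_cellWeight_add_sum_erase_adjacentDiagonalWeight
    (hS : IsLowerSet (S : Set (ℕ × ℕ))) (hx : Maximal (· ∈ S) (r, s)) :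
    Even (cellWeight (r, s) + ∑ y ∈ S.erase (r, s),
      (adjacentDiagonalWeight (r, s) y + adjacentDiagonalWeight y (r, s))) := by
  rw [sum_add_distrib, sum_erase_adjacentDiagonalWeight_maximal_left hS hx,
    sum_erase_adjacentDiagonalWeight_maximal_right hS hx]
  rcases lt_trichotomy r s with h | rfl | h
  · rw [min_eq_left (by omega : r + 1 ≤ s), min_eq_left (by omega : r ≤ s + 1), sum_range_succ']
    simp [cellWeight, cellContent, h.ne, h.asymm]
  · rw [min_eq_right (by omega), min_eq_left (by omega), sum_add_distrib]
    simp [cellWeight]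
  · rw [min_eq_right (by omega : s ≤ r + 1), min_eq_right (by omega : s + 1 ≤ r),
      sum_range_succ, sum_add_distrib]
    have hw : cellWeight (r, s) = 1 := by
      unfold cellWeight cellContent; split_ifs <;> omega
    simp only [hw, sum_const, card_range, nsmul_eq_mul, mul_one]
    exact ⟨-(s : ℤ), by ring⟩

end Corner

theorem even_reducedExponent {S : Finset (ℕ × ℕ)} (hS : IsLowerSet (S : Set (ℕ × ℕ))) :
    Even (reducedExponent S) := by
  induction S using Finset.strongInduction with
  | H S ih =>
  obtain rfl | hne := S.eq_empty_or_nonempty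
  · simp [reducedExponent]
  obtain ⟨⟨r, s⟩, hx⟩ := S.exists_maximal hne
  have hlower : IsLowerSet (S.erase (r, s) : Set (ℕ × ℕ)) := by
    rw [coe_erase]
    exact hS.diff_singleton_of_maximal hx
  rw [← insert_erase hx.1, reducedExponent_insert (notMem_erase _ S)]
  exact (ih _ (erase_ssubset hx.1) hlower).add
    (even_cellWeight_add_sum_erase_adjacentDiagonalWeight hS hx)

/-- **Lemma.** For every Young diagram `μ`, `(−1)^{D(μ)} · σ(μ) = 1`. -/
theorem youngDiagram_negOnePow_D_mul_sigma (μ : YoungDiagram) :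
    ((-1 : ℚ) ^ (youngD μ)) * (youngSigma μ : ℚ) = 1 := by
  have heven : Even (youngD μ + youngSigmaExponent μ) := by
    rw [youngD_add_youngSigmaExponent]
    exact (even_reducedExponent μ.isLowerSet).add (even_two_mul _)
  rw [youngSigma_eq_neg_one_pow, Int.cast_pow, Int.cast_neg, Int.cast_one, ← zpow_natCast,
    ← zpow_add₀ (by norm_num), heven.neg_one_zpow]
end

section
/- Let λ be a Young diagram, let n_λ = (n_□)_{□∈λ} be a reversed plane partition of shape λ, and let g, k₁ ∈ ℤ; set k₂ = 2g − 2 − k₁. Define the integers R₁ = n₀₀ + Σ_{(i,j)∈λ, i≥1}(n_{ij} − n_{i−1,j}) + Σ_{(i,j)∈λ, j≥1}(n_{ij} − n_{i,j−1}) − Σ_{(i,j)∈λ, i≥1, j≥1}(n_{ij} − n_{i−1,j−1}) and R₂ = Σ_{(i,j)∈λ, (i,j)≠(0,0)} (n_{ij} − i·k₁ − j·k₂ + 1 − g) − Σ_{((i,j),(l,k))∈λ×λ, (i,j)≠(l,k), (i,j)≠(l+1,k+1)} (n_{lk} − n_{ij} − (i−l)·k₁ − (j−k)·k₂ + 1 −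 g) + Σ_{((i,j),(l,k))∈λ×λ, (i,j)≠(l−1,k), (i,j)≠(l,k+1)} (n_{lk} − n_{ij} − (i−l+1)·k₁ − (j−k)·k₂ + 1 − g). Then R₁ + R₂ ≡ k₁·(c_λ + |λ|) + (1−g)·|λ| + |n_λ| (mod 2). -/
/-!
Both sides are compared through an exact integer identity. Over all of `λ × λ` the summands of
the two pair sums in `R₂` are `ψ(l,k) − ψ(i,j) + const` with `ψ(c) = n_c + i·k₁ + j·k₂`, so the
full sums are `|λ|²·const`, and only the excluded pairs survive: the diagonal and the pairs of
cells differing by a step `(1,0)`, `(0,1)` or `(1,1)`. The sums in `R₁` are likewise sums of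
increments of `n` along these steps. Everything then cancels up to even terms, using
`k₁ + k₂ = 2g − 2`, `|λ|(|λ| + 1) ≡ 0`, and the Euler characteristic count
`|λ| − #(1,0)-steps − #(0,1)-steps + #(1,1)-steps = 1` of a nonempty diagram.
-/

/-- `R₁ = n₀₀ + Σ_{(i,j)∈λ, i≥1}(n_{ij} − n_{i−1,j}) + Σ_{(i,j)∈λ, j≥1}(n_{ij} − n_{i,j−1})
  − Σ_{(i,j)∈λ, i,j≥1}(n_{ij} − n_{i−1,j−1})` for a reversed plane partition `f` of
shape `μ` (the term `n₀₀` is the sum of `f` over the cells equal to `(0,0)`). -/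
def rppR1 (μ : YoungDiagram) (f : ℕ × ℕ → ℕ) : ℤ :=
  (∑ c ∈ μ.cells.filter (fun c => c = (0, 0)), (f c : ℤ))
  + (∑ c ∈ μ.cells.filter (fun c => 1 ≤ c.1), ((f c : ℤ) - (f (c.1 - 1, c.2) : ℤ)))
  + (∑ c ∈ μ.cells.filter (fun c => 1 ≤ c.2), ((f c : ℤ) - (f (c.1, c.2 - 1) : ℤ)))
  - (∑ c ∈ μ.cells.filter (fun c => 1 ≤ c.1 ∧ 1 ≤ c.2),
      ((f c : ℤ) - (f (c.1 - 1, c.2 - 1) : ℤ)))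

/-- `R₂ = Σ_{(i,j)∈λ, (i,j)≠(0,0)} (n_{ij} − i·k₁ − j·k₂ + 1 − g)
  − Σ_{((i,j),(l,k))∈λ×λ, (i,j)≠(l,k), (i,j)≠(l+1,k+1)}
      (n_{lk} − n_{ij} − (i−l)·k₁ − (j−k)·k₂ + 1 − g)
  + Σ_{((i,j),(l,k))∈λ×λ, (i,j)≠(l−1,k), (i,j)≠(l,k+1)}
      (n_{lk} − n_{ij} − (i−l+1)·k₁ − (j−k)·k₂ + 1 − g)`. -/
def rppR2 (μ : YoungDiagram) (f : ℕ × ℕ → ℕ) (g k₁ k₂ : ℤ) : ℤ :=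
  (∑ c ∈ μ.cells.filter (fun c => c ≠ (0, 0)),
      ((f c : ℤ) - (c.1 : ℤ) * k₁ - (c.2 : ℤ) * k₂ + 1 - g))
  - (∑ p ∈ (μ.cells ×ˢ μ.cells).filter
      (fun p => p.1 ≠ p.2 ∧ p.1 ≠ (p.2.1 + 1, p.2.2 + 1)),
      ((f p.2 : ℤ) - (f p.1 : ℤ) - ((p.1.1 : ℤ) - p.2.1) * k₁
        - ((p.1.2 : ℤ) - p.2.2) * k₂ + 1 - g))
  + (∑ p ∈ (μ.cells ×ˢ μ.cells).filter
      (fun p => ¬((p.1.1 : ℤ) = (p.2.1 : ℤ) - 1 ∧ p.1.2 = p.2.2)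
        ∧ p.1 ≠ (p.2.1, p.2.2 + 1)),
      ((f p.2 : ℤ) - (f p.1 : ℤ) - ((p.1.1 : ℤ) - p.2.1 + 1) * k₁
        - ((p.1.2 : ℤ) - p.2.2) * k₂ + 1 - g))

open Finset

namespace Finset

theorem sum_filter_not_and_not {α M : Type*} [AddCommGroup M] (s : Finset α) (p q : α → Prop)
    [DecidablePred p] [DecidablePred q] (hpq : ∀ x ∈ s, ¬(p x ∧ q x)) (t : α → M) :
    ∑ x ∈ s with ¬p x ∧ ¬q x, t x
      = ∑ x ∈ s, t x - ∑ x ∈ s with p x, t x - ∑ x ∈ s with q x, t x := by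
  simp only [sum_filter, ← sum_sub_distrib]
  refine sum_congr rfl fun x hx => ?_
  have := hpq x hx
  split_ifs <;> simp_all

theorem sum_product_filter_fst_eq {α M : Type*} [DecidableEq α] [AddCommMonoid M]
    (s : Finset α) (e : α → α) (t : α × α → M) :
    ∑ p ∈ s ×ˢ s with p.1 = e p.2, t p = ∑ c ∈ s with e c ∈ s, t (e c, c) := by
  rw [sum_filter, sum_product_right, sum_filter]
  exact sum_congr rfl fun c _ => sum_ite_eq' s (e c) fun a => t (a, c)

theorem sum_product_filter_snd_eq {α M : Type*} [DecidableEq α] [AddCommMonoid M]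
    (s : Finset α) (e : α → α) (t : α × α → M) :
    ∑ p ∈ s ×ˢ s with p.2 = e p.1, t p = ∑ c ∈ s with e c ∈ s, t (c, e c) := by
  rw [sum_filter, sum_product, sum_filter]
  exact sum_congr rfl fun c _ => sum_ite_eq' s (e c) fun b => t (c, b)

theorem sum_product_sub_add_const {α R : Type*} [CommRing R] (s : Finset α) (φ : α → R) (a : R) :
    ∑ p ∈ s ×ˢ s, (φ p.2 - φ p.1 + a) = (#s : R) ^ 2 * a := by
  simp only [sum_product, sum_add_distrib, sum_sub_distrib, sum_const, nsmul_eq_mul, ← mul_sum,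
    card_product]
  push_cast
  ring

end Finset

def shiftCard (s : Finset (ℕ × ℕ)) (d : ℕ × ℕ) : ℕ := #{c ∈ s | c + d ∈ s}

def shiftDiffSum (s : Finset (ℕ × ℕ)) (φ : ℕ × ℕ → ℤ) (d : ℕ × ℕ) : ℤ :=
  ∑ c ∈ s with c + d ∈ s, (φ (c + d) - φ c)

theorem shiftCard_zero (s : Finset (ℕ × ℕ)) : shiftCard s 0 = #s := by
  simp [shiftCard]

theorem shiftDiffSum_zero (s : Finset (ℕ × ℕ)) (φ : ℕ × ℕ → ℤ) : shiftDiffSum s φ 0 = 0 := by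
  simp [shiftDiffSum]

theorem shiftDiffSum_add_linear (s : Finset (ℕ × ℕ)) (φ : ℕ × ℕ → ℤ) (a b : ℤ) (d : ℕ × ℕ) :
    shiftDiffSum s (fun c => φ c + c.1 * a + c.2 * b) d
      = shiftDiffSum s φ d + shiftCard s d * (d.1 * a + d.2 * b) := by
  simp only [shiftDiffSum, shiftCard, card_eq_sum_ones, Nat.cast_sum, sum_mul, ← sum_add_distrib]
  refine sum_congr rfl fun c _ => ?_
  push_cast [Prod.fst_add, Prod.snd_add]
  ring

theorem sum_product_filter_ne_shift (s : Finset (ℕ × ℕ)) {d d' : ℕ × ℕ} (hd' : d' ≠ 0)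
    (φ : ℕ × ℕ → ℤ) (a : ℤ) :
    ∑ p ∈ s ×ˢ s with p.2 ≠ p.1 + d ∧ p.1 ≠ p.2 + d', (φ p.2 - φ p.1 + a)
      = ((#s : ℤ) ^ 2 - shiftCard s d - shiftCard s d') * a
        - shiftDiffSum s φ d + shiftDiffSum s φ d' := by
  have hdisj : ∀ p ∈ s ×ˢ s, ¬(p.2 = p.1 + d ∧ p.1 = p.2 + d') := by
    rintro p - ⟨h, h'⟩
    rw [h, add_assoc, left_eq_add, add_eq_zero] at h'
    exact hd' h'.2
  rw [sum_filter_not_and_not _ _ _ hdisj, sum_product_sub_add_const,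
    sum_product_filter_snd_eq s (· + d), sum_product_filter_fst_eq s (· + d')]
  simp only [shiftCard, shiftDiffSum, sum_add_distrib, sum_const, nsmul_eq_mul,
    ← neg_sub (φ (_ + d')), sum_neg_distrib]
  ring

namespace IsLowerSet

variable {s : Finset (ℕ × ℕ)}

theorem sum_filter_le {M : Type*} [AddCommMonoid M]
    (hs : IsLowerSet (s : Set (ℕ × ℕ))) (d : ℕ × ℕ) (t : ℕ × ℕ → M) :
    ∑ c ∈ s with d ≤ c, t c = ∑ c ∈ s with c + d ∈ s, t (c + d) := by
  refine sum_nbij' (· - d) (· + d) (fun c hc => ?_) (fun c hc => ?_) (fun c hc => ?_)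
    (fun c hc => ?_) (fun c hc => ?_)
  all_goals simp only [mem_filter] at hc ⊢
  · exact ⟨hs tsub_le_self hc.1, by rw [tsub_add_cancel_of_le hc.2]; exact hc.1⟩
  · exact ⟨hc.2, le_add_self⟩
  · exact tsub_add_cancel_of_le hc.2
  · exact add_tsub_cancel_right c d
  · rw [tsub_add_cancel_of_le hc.2]

theorem card_filter_le (hs : IsLowerSet (s : Set (ℕ × ℕ))) (d : ℕ × ℕ) :
    #{c ∈ s | d ≤ c} = shiftCard s d := by
  rw [card_eq_sum_ones, shiftCard, card_eq_sum_ones]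
  exact hs.sum_filter_le d _

theorem sum_filter_le_sub (hs : IsLowerSet (s : Set (ℕ × ℕ))) (φ : ℕ × ℕ → ℤ) (d : ℕ × ℕ) :
    ∑ c ∈ s with d ≤ c, (φ c - φ (c - d)) = shiftDiffSum s φ d := by
  simp [hs.sum_filter_le, shiftDiffSum]

theorem card_add_shiftCard (hs : IsLowerSet (s : Set (ℕ × ℕ))) (h0 : (0, 0) ∈ s) :
    #s + shiftCard s (1, 1) = shiftCard s (1, 0) + shiftCard s (0, 1) + 1 := by
  have hinter : {c ∈ s | (1, 0) ≤ c} ∩ {c ∈ s | (0, 1) ≤ c} = {c ∈ s | (1, 1) ≤ c} := by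
    rw [← filter_and]
    exact filter_congr fun c _ => by simp only [Prod.le_def]; omega
  have hunion : {c ∈ s | (1, 0) ≤ c} ∪ {c ∈ s | (0, 1) ≤ c} = s.erase (0, 0) := by
    rw [← filter_or, ← filter_ne']
    exact filter_congr fun c _ => by simp only [Prod.le_def, ne_eq, Prod.ext_iff]; omega
  have := card_union_add_card_inter {c ∈ s | (1, 0) ≤ c} {c ∈ s | (0, 1) ≤ c}
  rw [hinter, hunion, card_erase_of_mem h0, hs.card_filter_le, hs.card_filter_le,
    hs.card_filter_le] at this
  have : 0 < #s := card_pos.mpr ⟨_, h0⟩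
  omega

end IsLowerSet

theorem rppR1_eq (μ : YoungDiagram) (f : ℕ × ℕ → ℕ) (h0 : (0, 0) ∈ μ) :
    rppR1 μ f = f (0, 0) + shiftDiffSum μ.cells (f ·) (1, 0) + shiftDiffSum μ.cells (f ·) (0, 1)
      - shiftDiffSum μ.cells (f ·) (1, 1) := by
  have filter_congr_le (d : ℕ × ℕ) (p : ℕ × ℕ → Prop) [DecidablePred p] (hp : ∀ c, p c ↔ d ≤ c) :
      {c ∈ μ.cells | p c} = {c ∈ μ.cells | d ≤ c} :=
    filter_congr fun c _ => hp c
  rw [rppR1, filter_eq', if_pos ((μ.mem_cells _).mpr h0), sum_singleton,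
    filter_congr_le (1, 0) (1 ≤ ·.1) fun c => by simp [Prod.le_def],
    filter_congr_le (0, 1) (1 ≤ ·.2) fun c => by simp [Prod.le_def],
    filter_congr_le (1, 1) (fun c => 1 ≤ c.1 ∧ 1 ≤ c.2) fun c => by simp [Prod.le_def],
    ← μ.isLowerSet.sum_filter_le_sub,
    ← μ.isLowerSet.sum_filter_le_sub, ← μ.isLowerSet.sum_filter_le_sub]
  rfl

theorem rppR2_eq (μ : YoungDiagram) (f : ℕ × ℕ → ℕ) (h0 : (0, 0) ∈ μ) (g k₁ k₂ : ℤ) :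
    rppR2 μ f g k₁ k₂
      = ∑ c ∈ μ.cells, (f c : ℤ) - k₁ * ∑ c ∈ μ.cells, (c.1 : ℤ) - k₂ * ∑ c ∈ μ.cells, (c.2 : ℤ)
        + (#μ.cells - 1) * (1 - g) - f (0, 0)
        - ((#μ.cells ^ 2 - #μ.cells - shiftCard μ.cells (1, 1)) * (1 - g)
          + shiftDiffSum μ.cells (f ·) (1, 1) + shiftCard μ.cells (1, 1) * (k₁ + k₂))
        + ((#μ.cells ^ 2 - shiftCard μ.cells (1, 0) - shiftCard μ.cells (0, 1)) * (1 - g - k₁)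
          - shiftDiffSum μ.cells (f ·) (1, 0) - shiftCard μ.cells (1, 0) * k₁
          + shiftDiffSum μ.cells (f ·) (0, 1) + shiftCard μ.cells (0, 1) * k₂) := by
  set s := μ.cells
  set ψ : ℕ × ℕ → ℤ := fun c => f c + c.1 * k₁ + c.2 * k₂
  have hA : ∑ c ∈ s with c ≠ (0, 0), ((f c : ℤ) - c.1 * k₁ - c.2 * k₂ + 1 - g)
      = ∑ c ∈ s, (f c : ℤ) - k₁ * ∑ c ∈ s, (c.1 : ℤ) - k₂ * ∑ c ∈ s, (c.2 : ℤ)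
        + (#s - 1) * (1 - g) - f (0, 0) := by
    rw [filter_ne', sum_erase_eq_sub ((μ.mem_cells _).mpr h0)]
    simp only [sum_add_distrib, sum_sub_distrib, ← sum_mul, sum_const, nsmul_eq_mul]
    push_cast
    ring
  have hB : ∑ p ∈ s ×ˢ s with p.1 ≠ p.2 ∧ p.1 ≠ (p.2.1 + 1, p.2.2 + 1),
        ((f p.2 : ℤ) - f p.1 - ((p.1.1 : ℤ) - p.2.1) * k₁ - ((p.1.2 : ℤ) - p.2.2) * k₂ + 1 - g)
      = (#s ^ 2 - #s - shiftCard s (1, 1)) * (1 - g) + shiftDiffSum s ψ (1, 1) := by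
    convert sum_product_filter_ne_shift s (d := 0) (d' := (1, 1)) (by decide) ψ (1 - g) using 1
    · refine sum_congr (filter_congr fun p _ => ?_) fun p _ => by ring
      simp only [add_zero, Prod.ext_iff, ne_eq]
      tauto
    · rw [shiftCard_zero, shiftDiffSum_zero]
      ring
  have hC : ∑ p ∈ s ×ˢ s with ¬((p.1.1 : ℤ) = (p.2.1 : ℤ) - 1 ∧ p.1.2 = p.2.2)
        ∧ p.1 ≠ (p.2.1, p.2.2 + 1),
        ((f p.2 : ℤ) - f p.1 - ((p.1.1 : ℤ) - p.2.1 + 1) * k₁ - ((p.1.2 : ℤ) - p.2.2) * k₂ + 1 - g)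
      = (#s ^ 2 - shiftCard s (1, 0) - shiftCard s (0, 1)) * (1 - g - k₁)
        - shiftDiffSum s ψ (1, 0) + shiftDiffSum s ψ (0, 1) := by
    convert sum_product_filter_ne_shift s (d := (1, 0)) (d' := (0, 1)) (by decide) ψ (1 - g - k₁)
      using 1
    refine sum_congr (filter_congr fun p _ => ?_) fun p _ => by ring
    simp only [Prod.ext_iff, Prod.fst_add, Prod.snd_add, ne_eq]
    omega
  rw [rppR2, hA, hB, hC, shiftDiffSum_add_linear, shiftDiffSum_add_linear, shiftDiffSum_add_linear]
  push_cast
  ring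

theorem rpp_rank_parity_general (μ : YoungDiagram) (f : ℕ × ℕ → ℕ)
    (g k₁ : ℤ) :
    rppR1 μ f + rppR2 μ f g k₁ (2 * g - 2 - k₁)
      ≡ k₁ * ((∑ c ∈ μ.cells, ((c.2 : ℤ) - c.1)) + (μ.card : ℤ))
          + (1 - g) * (μ.card : ℤ) + ∑ c ∈ μ.cells, (f c : ℤ) [ZMOD 2] := by
  obtain hμ | ⟨c, hc⟩ := μ.cells.eq_empty_or_nonempty
  · simp [rppR1, rppR2, YoungDiagram.card, hμ]
  have h0 : (0, 0) ∈ μ := μ.up_left_mem (Nat.zero_le _) (Nat.zero_le _) ((μ.mem_cells c).mp hc)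
  have euler : (#μ.cells : ℤ) + shiftCard μ.cells (1, 1)
      = shiftCard μ.cells (1, 0) + shiftCard μ.cells (0, 1) + 1 := by
    exact_mod_cast μ.isLowerSet.card_add_shiftCard ((μ.mem_cells _).mpr h0)
  have key : rppR1 μ f + rppR2 μ f g k₁ (2 * g - 2 - k₁) + k₁ * (#μ.cells * (#μ.cells + 1))
      = k₁ * ((∑ c ∈ μ.cells, ((c.2 : ℤ) - c.1)) + (μ.card : ℤ))
          + (1 - g) * (μ.card : ℤ) + ∑ c ∈ μ.cells, (f c : ℤ)
        + 2 * (shiftDiffSum μ.cells (f ·) (0, 1) - shiftDiffSum μ.cells (f ·) (1, 1)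
          + (1 - g) * (∑ c ∈ μ.cells, (c.2 : ℤ) - shiftCard μ.cells (0, 1)
            + shiftCard μ.cells (1, 1))) := by
    rw [rppR1_eq μ f h0, rppR2_eq μ f h0, sum_sub_distrib, YoungDiagram.card]
    linear_combination (1 - g) * euler
  obtain ⟨m, hm⟩ := Int.even_mul_succ_self (#μ.cells : ℤ)
  rw [hm, ← two_mul, mul_left_comm] at key
  calc _ ≡ _ + 2 * (k₁ * m) [ZMOD 2] := Int.modEq_add_fac_self.symm
    _ = _ := key
    _ ≡ _ [ZMOD 2] := Int.modEq_add_fac_self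

/-- **Lemma (parity of the virtual rank).** Let `μ` be a Young diagram, `f` a reversed
plane partition of shape `μ`, and `g, k₁ ∈ ℤ`; set `k₂ = 2g − 2 − k₁`.  Then
`R₁ + R₂ ≡ k₁·(c_μ + |μ|) + (1−g)·|μ| + |f| (mod 2)`, where `c_μ = Σ_{(i,j)∈μ}(j−i)`
and `|f| = Σ_{□∈μ} f(□)`. -/
theorem rpp_rank_parity (μ : YoungDiagram) (f : ℕ × ℕ → ℕ)
    (hf : ∀ c c', c ∈ μ → c' ∈ μ → c.1 ≤ c'.1 → c.2 ≤ c'.2 → f c ≤ f c')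
    (g k₁ : ℤ) :
    rppR1 μ f + rppR2 μ f g k₁ (2 * g - 2 - k₁)
      ≡ k₁ * ((∑ c ∈ μ.cells, ((c.2 : ℤ) - c.1)) + (μ.card : ℤ))
          + (1 - g) * (μ.card : ℤ) + ∑ c ∈ μ.cells, (f c : ℤ) [ZMOD 2] :=
  rpp_rank_parity_general μ f g k₁
end
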